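/- arXiv:2007.14309 — 6 statements merged into one kernel-verified Lean document; each statement's English description precedes it below -/
import Mathlib

section
/- Let X be a complex Hilbert space, C a Hilbert cone in X, and let A and B be bounded self-adjoint operators on X. Assume that exp(−tA) is positivity preserving with respect to C for every t ≥ 0 and that B is positivity preserving with respect to C. Then for every t ≥ 0 the operator exp(−t(A − B)) − exp(−tA) is positivity preserving with respect to C, i.e., exp(−t(A − B)) ⊵ exp(−tA) with respect to C. -/
/-!
By the Lie–Trotter formula, `exp (-t (A - B)) = lim (Q * exp ((t / n) B)) ^ n` with
`Q = exp (-(t / n) A)`. The operators mapping `C` into itself form a closed cone `P` that is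
closed under multiplication. Since `B ∈ P` and the exponential series has nonnegative
coefficients, `exp ((t / n) B) - 1 ∈ P`, so `S = Q * exp ((t / n) B)` satisfies
`S - Q ∈ P` and `Q ∈ P`. Telescoping `S ^ n - Q ^ n` then gives `S ^ n - exp (-t A) ∈ P`,
and closedness of `P` passes this to the limit.
-/

open scoped ComplexOrder

/-- A *Hilbert cone* in a complex Hilbert space `X`: a closed convex cone `C` such that
the inner product of any two elements of `C` is a nonnegative real number, and every
vector of `X` decomposes as `u - v + i (u' - v')` with the two pairs orthogonal. -/
def IsHilbertCone {X : Type*} [NormedAddCommGroup X] [InnerProductSpace ℂ X]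
    (C : Set X) : Prop :=
  IsClosed C ∧ Convex ℝ C ∧
    (∀ (c : ℝ), 0 ≤ c → ∀ u ∈ C, c • u ∈ C) ∧
    (∀ u ∈ C, ∀ v ∈ C, (0 : ℂ) ≤ (inner ℂ u v : ℂ)) ∧
    (∀ w : X, ∃ u ∈ C, ∃ v ∈ C, ∃ u' ∈ C, ∃ v' ∈ C,
      w = u - v + Complex.I • (u' - v') ∧
        (inner ℂ u v : ℂ) = 0 ∧ (inner ℂ u' v' : ℂ) = 0)

open NormedSpace Filter Topology
open scoped Nat

section NormOneClass

variable {𝔸 : Type*} [NormedRing 𝔸] [NormOneClass 𝔸]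

theorem norm_pow_sub_pow_le {S T : 𝔸} {M : ℝ} (hS : ‖S‖ ≤ M) (hT : ‖T‖ ≤ M) (n : ℕ) :
    ‖S ^ n - T ^ n‖ ≤ n * M ^ (n - 1) * ‖S - T‖ := by
  induction n with
  | zero => simp
  | succ n ih =>
    have hM : 0 ≤ M := (norm_nonneg S).trans hS
    have hMn : M * (n * M ^ (n - 1)) = n * M ^ n := by
      rcases n with _ | n
      · simp
      · rw [Nat.add_sub_cancel, pow_succ]; ring
    calc ‖S ^ (n + 1) - T ^ (n + 1)‖ = ‖S * (S ^ n - T ^ n) + (S - T) * T ^ n‖ := by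
          rw [pow_succ' S, pow_succ' T]; noncomm_ring
      _ ≤ ‖S‖ * ‖S ^ n - T ^ n‖ + ‖S - T‖ * ‖T‖ ^ n :=
          norm_add_le_of_le (norm_mul_le _ _)
            ((norm_mul_le _ _).trans (by gcongr; exact norm_pow_le T n))
      _ ≤ M * (n * M ^ (n - 1) * ‖S - T‖) + ‖S - T‖ * M ^ n := by gcongr
      _ = (n + 1 : ℕ) * M ^ (n + 1 - 1) * ‖S - T‖ := by
          push_cast; linear_combination ‖S - T‖ * hMn

theorem norm_exp_le_real_exp_norm [NormedAlgebra ℚ 𝔸] [CompleteSpace 𝔸] (x : 𝔸) :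
    ‖exp x‖ ≤ Real.exp ‖x‖ := by
  have hx := exp_series_hasSum_exp' (𝕂 := ℚ) x
  have hr := exp_series_hasSum_exp' (𝕂 := ℝ) ‖x‖
  rw [Real.exp_eq_exp_ℝ, ← hr.tsum_eq, ← hx.tsum_eq]
  refine (norm_tsum_le_tsum_norm (norm_expSeries_summable' x)).trans ?_
  refine Summable.tsum_le_tsum (fun n => ?_) (norm_expSeries_summable' x) hr.summable
  rw [norm_smul, smul_eq_mul, norm_inv, ← Rat.norm_cast_real, Rat.cast_natCast,
    RCLike.norm_natCast]
  exact mul_le_mul_of_nonneg_left (norm_pow_le x n) (by positivity)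

end NormOneClass

theorem tendsto_natCast_mul_norm_inv_of_hasDerivAt {𝕂 E : Type*} [RCLike 𝕂]
    [NormedAddCommGroup E] [NormedSpace 𝕂 E] {f : 𝕂 → E} (hf : HasDerivAt f 0 0)
    (hf0 : f 0 = 0) : Tendsto (fun n : ℕ => (n : ℝ) * ‖f (n : 𝕂)⁻¹‖) atTop (𝓝 0) := by
  have hinv : Tendsto (fun n : ℕ => (n : 𝕂)⁻¹) atTop (𝓝[≠] 0) :=
    tendsto_nhdsWithin_iff.2 ⟨tendsto_inv_atTop_nhds_zero_nat,
      (eventually_ne_atTop 0).mono fun n hn => by simpa using hn⟩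
  have hslope := ((hasDerivAt_iff_tendsto_slope_zero.1 hf).comp hinv).norm
  rw [norm_zero] at hslope
  refine hslope.congr fun n => ?_
  simp [hf0, norm_smul]

section LieProduct

variable {𝕂 𝔸 : Type*} [RCLike 𝕂] [NormedRing 𝔸] [NormedAlgebra 𝕂 𝔸] [CompleteSpace 𝔸]

theorem exp_inv_natCast_smul_pow {n : ℕ} (hn : n ≠ 0) (x : 𝔸) :
    exp ((n : 𝕂)⁻¹ • x) ^ n = exp x := by
  let _ : NormedAlgebra ℚ 𝔸 := NormedAlgebra.restrictScalars ℚ 𝕂 𝔸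
  rw [← exp_nsmul, ← Nat.cast_smul_eq_nsmul 𝕂, smul_smul,
    mul_inv_cancel₀ (Nat.cast_ne_zero.2 hn), one_smul]

variable (𝕂) in
theorem hasDerivAt_exp_smul_mul_exp_smul_sub_exp_smul (x y : 𝔸) :
    HasDerivAt (fun s : 𝕂 => exp (s • x) * exp (s • y) - exp (s • (x + y))) 0 0 := by
  have h := ((hasDerivAt_exp_smul_const x (0 : 𝕂)).mul (hasDerivAt_exp_smul_const y 0)).sub
    (hasDerivAt_exp_smul_const (x + y) (0 : 𝕂))
  exact h.congr_deriv (by simp)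

/-- The Lie product formula. The two factors agree to first order, so their difference is
`o(1 / n)`, while both have norm at most `exp ((‖x‖ + ‖y‖) / n)`. -/
theorem tendsto_exp_inv_natCast_smul_mul_exp_pow [NormOneClass 𝔸] (x y : 𝔸) :
    Tendsto (fun n : ℕ => (exp ((n : 𝕂)⁻¹ • x) * exp ((n : 𝕂)⁻¹ • y)) ^ n) atTop
      (𝓝 (exp (x + y))) := by
  let _ : NormedAlgebra ℚ 𝔸 := NormedAlgebra.restrictScalars ℚ 𝕂 𝔸
  set c := ‖x‖ + ‖y‖
  have hderiv := tendsto_natCast_mul_norm_inv_of_hasDerivAt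
    (hasDerivAt_exp_smul_mul_exp_smul_sub_exp_smul 𝕂 x y) (by simp)
  rw [tendsto_iff_norm_sub_tendsto_zero]
  refine squeeze_zero' (.of_forall fun n => norm_nonneg _) ?_
    (by simpa only [mul_zero] using hderiv.const_mul (Real.exp c))
  filter_upwards [eventually_ne_atTop 0] with n hn
  have hexp (z : 𝔸) : ‖exp ((n : 𝕂)⁻¹ • z)‖ ≤ Real.exp (‖z‖ / n) :=
    (norm_exp_le_real_exp_norm _).trans_eq <| by
      rw [norm_smul, norm_inv, RCLike.norm_natCast, inv_mul_eq_div]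
  have hS : ‖exp ((n : 𝕂)⁻¹ • x) * exp ((n : 𝕂)⁻¹ • y)‖ ≤ Real.exp (c / n) := by
    grw [norm_mul_le, hexp x, hexp y, ← Real.exp_add, add_div]
  have hT : ‖exp ((n : 𝕂)⁻¹ • (x + y))‖ ≤ Real.exp (c / n) := by
    grw [hexp, norm_add_le]
  have hpow : Real.exp (c / n) ^ (n - 1) ≤ Real.exp c := by
    calc Real.exp (c / n) ^ (n - 1) ≤ Real.exp (c / n) ^ n :=
          pow_le_pow_right₀ (Real.one_le_exp (by positivity)) (Nat.sub_le n 1)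
      _ = Real.exp c := by rw [← Real.exp_nat_mul, mul_div_cancel₀ _ (by simpa using hn)]
  rw [← exp_inv_natCast_smul_pow (𝕂 := 𝕂) hn (x + y)]
  grw [norm_pow_sub_pow_le hS hT n, hpow]
  exact le_of_eq (by ring)

end LieProduct

def IsHilbertCone.toProperCone {X : Type*} [NormedAddCommGroup X] [InnerProductSpace ℂ X]
    {C : Set X} (hC : IsHilbertCone C) : ProperCone ℝ X where
  carrier := C
  add_mem' {u v} hu hv := by
    have hmid := hC.2.1 hu hv (by norm_num : (0 : ℝ) ≤ 2⁻¹) (by norm_num : (0 : ℝ) ≤ 2⁻¹)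
      (by norm_num)
    simpa [smul_add, smul_smul] using hC.2.2.1 2 zero_le_two _ hmid
  zero_mem' := by
    obtain ⟨u, hu, -⟩ := hC.2.2.2.2 0
    simpa using hC.2.2.1 0 le_rfl u hu
  smul_mem' c u hu := hC.2.2.1 c c.2 u hu
  isClosed' := hC.1

namespace ProperCone

variable {X : Type*} [NormedAddCommGroup X] [NormedSpace ℂ X] (K : ProperCone ℝ X)

def positivityPreserving : ProperCone ℝ (X →L[ℂ] X) where
  carrier := {T | ∀ u ∈ K, T u ∈ K}
  add_mem' hS hT u hu := K.add_mem (hS u hu) (hT u hu)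
  zero_mem' _ _ := K.zero_mem
  smul_mem' c _ hT u hu := K.smul_mem (hT u hu) c.2
  isClosed' := by
    simp only [Set.ofPred_forall]
    exact isClosed_biInter fun u _ => K.isClosed.preimage (continuous_eval_const u)

variable {K}

theorem one_mem_positivityPreserving : 1 ∈ K.positivityPreserving := fun _ hu => hu

theorem mul_mem_positivityPreserving {S T : X →L[ℂ] X} (hS : S ∈ K.positivityPreserving)
    (hT : T ∈ K.positivityPreserving) : S * T ∈ K.positivityPreserving :=
  fun u hu => hS _ (hT u hu)

theorem pow_mem_positivityPreserving {T : X →L[ℂ] X} (hT : T ∈ K.positivityPreserving)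
    (n : ℕ) : T ^ n ∈ K.positivityPreserving := by
  induction n with
  | zero => exact one_mem_positivityPreserving
  | succ n ih => rw [pow_succ]; exact mul_mem_positivityPreserving ih hT

theorem pow_sub_pow_mem_positivityPreserving {S T : X →L[ℂ] X}
    (hT : T ∈ K.positivityPreserving) (hST : S - T ∈ K.positivityPreserving) (n : ℕ) :
    S ^ n - T ^ n ∈ K.positivityPreserving := by
  have hS : S ∈ K.positivityPreserving := by simpa using add_mem hST hT
  induction n with
  | zero => simp
  | succ n ih =>
    have key : S ^ (n + 1) - T ^ (n + 1) = S * (S ^ n - T ^ n) + (S - T) * T ^ n := by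
      rw [pow_succ' S, pow_succ' T]; noncomm_ring
    rw [key]
    exact add_mem (mul_mem_positivityPreserving hS ih)
      (mul_mem_positivityPreserving hST (pow_mem_positivityPreserving hT n))

theorem exp_sub_one_mem_positivityPreserving [CompleteSpace X] {T : X →L[ℂ] X}
    (hT : T ∈ K.positivityPreserving) : exp T - 1 ∈ K.positivityPreserving := by
  have hsum := (hasSum_nat_add_iff' 1).2 (exp_series_hasSum_exp' (𝕂 := ℝ) T)
  rw [Finset.sum_range_one, Nat.factorial_zero, Nat.cast_one, inv_one, pow_zero,
    one_smul] at hsum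
  refine K.positivityPreserving.isClosed.mem_of_tendsto hsum.tendsto_sum_nat
    (.of_forall fun n => sum_mem fun k _ => ?_)
  exact K.positivityPreserving.smul_mem (pow_mem_positivityPreserving hT _) (by positivity)

end ProperCone

theorem exp_neg_sub_posPreserving_general
    {X : Type*} [NormedAddCommGroup X] [InnerProductSpace ℂ X] [CompleteSpace X]
    (C : Set X) (hC : IsHilbertCone C) (A B : X →L[ℂ] X)
    (hexpA : ∀ t : ℝ, 0 ≤ t → ∀ u ∈ C, NormedSpace.exp (-((t : ℂ) • A)) u ∈ C)
    (hB : ∀ u ∈ C, B u ∈ C) :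
    ∀ t : ℝ, 0 ≤ t → ∀ u ∈ C,
      (NormedSpace.exp (-((t : ℂ) • (A - B))) - NormedSpace.exp (-((t : ℂ) • A))) u ∈ C := by
  intro t ht
  let P := hC.toProperCone.positivityPreserving
  change _ ∈ P
  -- `X →L[ℂ] X` is a `NormOneClass` only for nontrivial `X`.
  rcases subsingleton_or_nontrivial X with hX | hX
  · convert zero_mem P
    exact Subsingleton.elim _ _
  have hsplit : -((t : ℂ) • (A - B)) = -((t : ℂ) • A) + (t : ℂ) • B := by rw [smul_sub]; abel
  rw [hsplit]
  refine P.isClosed.mem_of_tendsto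
    ((tendsto_exp_inv_natCast_smul_mul_exp_pow (𝕂 := ℂ) _ _).sub_const (exp (-((t : ℂ) • A)))) ?_
  filter_upwards [eventually_ne_atTop 0] with n hn
  have hscale (Z : X →L[ℂ] X) : (n : ℂ)⁻¹ • (t : ℂ) • Z = ((t / n : ℝ) : ℂ) • Z := by
    rw [smul_smul]; push_cast; ring_nf
  have htn : 0 ≤ t / n := by positivity
  have hQ : exp ((n : ℂ)⁻¹ • -((t : ℂ) • A)) ∈ P := by
    rw [smul_neg, hscale]; exact hexpA _ htn
  have hexpB : exp ((n : ℂ)⁻¹ • (t : ℂ) • B) - 1 ∈ P := by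
    rw [hscale, Complex.coe_smul]
    exact ProperCone.exp_sub_one_mem_positivityPreserving (P.smul_mem hB htn)
  rw [← exp_inv_natCast_smul_pow (𝕂 := ℂ) hn (-((t : ℂ) • A))]
  refine ProperCone.pow_sub_pow_mem_positivityPreserving hQ ?_ n
  rw [← mul_sub_one]
  exact ProperCone.mul_mem_positivityPreserving hQ hexpB

theorem exp_neg_sub_posPreserving
    {X : Type*} [NormedAddCommGroup X] [InnerProductSpace ℂ X] [CompleteSpace X]
    (C : Set X) (hC : IsHilbertCone C) (A B : X →L[ℂ] X)
    (hAsa : IsSelfAdjoint A) (hBsa : IsSelfAdjoint B)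
    (hexpA : ∀ t : ℝ, 0 ≤ t → ∀ u ∈ C, NormedSpace.exp (-((t : ℂ) • A)) u ∈ C)
    (hB : ∀ u ∈ C, B u ∈ C) :
    ∀ t : ℝ, 0 ≤ t → ∀ u ∈ C,
      (NormedSpace.exp (-((t : ℂ) • (A - B))) - NormedSpace.exp (-((t : ℂ) • A))) u ∈ C :=
  exp_neg_sub_posPreserving_general C hC A B hexpA hB
end

section
/- (Perron–Frobenius–Faris) Let X be a nonzero complex Hilbert space, C a Hilbert cone in X, and A a bounded self-adjoint operator on X. Let E be the infimum of the spectrum of A, and assume that E is an eigenvalue of A. If the family {exp(−tA)}_{t≥0} is ergodic with respect to C, then the eigenspace ker(A − E·I) is one-dimensional and is spanned by a vector that is strictly positive with respect to C. -/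
/-!
Shifting the generator, `B = A - E` is positive, so `t ↦ exp (-t B)` is a family of self-adjoint
contractions that preserves `C`, is ergodic, and whose common fixed vectors are exactly `ker B`.
If these operators fix `u - v + i (u' - v')`, a decomposition given by the cone, they fix its real
and imaginary parts (which are unique), and then each of `u, v, u', v'`, because they are
contractions and `⟪u, v⟫ = ⟪u', v'⟫ = 0`. Ergodicity rules out two nonzero orthogonal fixed cone
vectors. Hence the eigenvector yields a nonzero fixed cone vector `ψ`, ergodicity makes `ψ`
strictly positive, and a fixed vector orthogonal to `ψ` must vanish, so the fixed space is `ℂ ψ`.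
-/

open scoped ComplexOrder

/-- A vector `v` is *strictly positive* w.r.t. a cone `C` if `⟪v, u⟫ > 0` for every
nonzero `u ∈ C`. -/
def StrictlyPos {X : Type*} [NormedAddCommGroup X] [InnerProductSpace ℂ X]
    (C : Set X) (v : X) : Prop :=
  ∀ u ∈ C, u ≠ 0 → (0 : ℂ) < (inner ℂ v u : ℂ)

open NormedSpace Set Submodule
open scoped InnerProductSpace NNReal

section Exponential

lemma norm_exp_le_one_of_nonpos {𝔸 : Type*} [CStarAlgebra 𝔸] [PartialOrder 𝔸]
    [StarOrderedRing 𝔸] {a : 𝔸} (ha : a ≤ 0) : ‖exp a‖ ≤ 1 := by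
  have hsa : IsSelfAdjoint a := by simpa using (neg_nonneg.2 ha).isSelfAdjoint.neg
  rw [CStarAlgebra.norm_le_one_iff_of_nonneg _ hsa.exp_nonneg,
    ← CFC.real_exp_eq_normedSpace_exp hsa, cfc_le_one_iff Real.exp a]
  intro x hx
  rw [Real.exp_le_one_iff]
  exact (le_algebraMap_iff_spectrum_le (r := (0 : ℝ)) hsa).1 (by simpa using ha) x hx

lemma sub_algebraMap_nonneg_of_mem_lowerBounds_spectrum {𝔸 : Type*} [CStarAlgebra 𝔸]
    [PartialOrder 𝔸] [StarOrderedRing 𝔸] {a : 𝔸} (ha : IsSelfAdjoint a) {E : ℝ}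
    (hE : E ∈ lowerBounds {r : ℝ | (r : ℂ) ∈ spectrum ℂ a}) : 0 ≤ a - algebraMap ℝ 𝔸 E := by
  rw [sub_nonneg, algebraMap_le_iff_le_spectrum ha]
  exact fun x hx => hE (spectrum.algebraMap_mem ℂ hx)

lemma exp_add_algebraMap {𝔸 : Type*} [NormedRing 𝔸] [NormedAlgebra ℝ 𝔸] [CompleteSpace 𝔸]
    (a : 𝔸) (r : ℝ) : exp (a + algebraMap ℝ 𝔸 r) = Real.exp r • exp a := by
  let : NormedAlgebra ℚ 𝔸 := .restrictScalars ℚ ℝ 𝔸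
  rw [exp_add_of_commute (Algebra.commutes r a).symm, ← algebraMap_exp_comm,
    ← Real.exp_eq_exp_ℝ, ← Algebra.commutes, ← Algebra.smul_def]

variable {V : Type*} [NormedAddCommGroup V] [NormedSpace ℂ V] [CompleteSpace V]

lemma exp_apply_eq_self_of_apply_eq_zero {S : V →L[ℂ] V} {x : V} (hx : S x = 0) :
    exp S x = x := by
  have h := (exp_series_hasSum_exp' (𝕂 := ℂ) S).mapL (ContinuousLinearMap.apply ℂ V x)
  refine (h.unique (hasSum_single 0 fun n hn => ?_)).trans (by simp)
  obtain ⟨m, rfl⟩ := Nat.exists_eq_succ_of_ne_zero hn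
  simp [pow_succ, hx]

lemma apply_eq_zero_of_forall_exp_neg_smul_apply_eq {S : V →L[ℂ] V} {x : V}
    (h : ∀ t : ℝ, 0 ≤ t → exp (-(t • S)) x = x) : S x = 0 := by
  have hderiv : HasDerivAt (fun t : ℝ => exp (-(t • S)) x) (-S x) 0 := by
    simpa [Function.comp_def] using
      ((ContinuousLinearMap.apply ℂ V x).restrictScalars ℝ).hasFDerivAt.comp_hasDerivAt
        (0 : ℝ) (hasDerivAt_exp_smul_const' (-S) (0 : ℝ))
  have hconst : HasDerivWithinAt (fun t : ℝ => exp (-(t • S)) x) 0 (Ici 0) 0 :=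
    (hasDerivWithinAt_const 0 _ x).congr (fun t ht => h t ht) (by simp)
  simpa using (uniqueDiffOn_Ici 0 0 self_mem_Ici).eq_deriv _ hderiv.hasDerivWithinAt hconst

end Exponential

lemma eq_of_norm_le_of_re_inner_eq_norm_sq {X : Type*} [NormedAddCommGroup X]
    [InnerProductSpace ℂ X] {a b : X} (hb : ‖b‖ ≤ ‖a‖) (h : (⟪a, b⟫_ℂ).re = ‖a‖ ^ 2) :
    b = a := by
  have h' : ‖b - a‖ ^ 2 ≤ 0 := by
    rw [@norm_sub_sq ℂ, ← inner_re_symm, RCLike.re_to_complex, h]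
    nlinarith [norm_nonneg b]
  exact sub_eq_zero.1 (norm_eq_zero.1 (by nlinarith [norm_nonneg (b - a)]))

section Ergodic

variable {X : Type*} [NormedAddCommGroup X] [InnerProductSpace ℂ X] {C : Set X}
  {ι : Type*} {T : ι → X →L[ℂ] X}

def IsErgodic (C : Set X) (T : ι → X →L[ℂ] X) : Prop :=
  (∀ i, MapsTo (T i) C C) ∧ ∀ u ∈ C, u ≠ 0 → ∀ v ∈ C, v ≠ 0 → ∃ i, 0 < ⟪u, T i v⟫_ℂ

lemma StrictlyPos.eq_zero_of_inner_eq_zero {ψ u : X} (hψ : StrictlyPos C ψ) (hu : u ∈ C)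
    (h : ⟪ψ, u⟫_ℂ = 0) : u = 0 :=
  by_contra fun hu0 => (hψ u hu hu0).ne' h

namespace IsErgodic

lemma eq_zero_or_eq_zero_of_inner_eq_zero (hT : IsErgodic C T) {u v : X} (hu : u ∈ C)
    (hv : v ∈ C) (hv' : ∀ i, T i v = v) (huv : ⟪u, v⟫_ℂ = 0) : u = 0 ∨ v = 0 := by
  by_contra! h
  obtain ⟨i, hi⟩ := hT.2 u hu h.1 v hv h.2
  rw [hv' i, huv] at hi
  exact hi.false

lemma strictlyPos_of_forall_map_eq (hT : IsErgodic C T)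
    (hTsym : ∀ i, (T i : X →ₗ[ℂ] X).IsSymmetric) {ψ : X} (hψC : ψ ∈ C) (hψ0 : ψ ≠ 0)
    (hψ : ∀ i, T i ψ = ψ) : StrictlyPos C ψ := by
  intro u hu hu0
  obtain ⟨i, hi⟩ := hT.2 ψ hψC hψ0 u hu hu0
  have hsym : ⟪ψ, T i u⟫_ℂ = ⟪T i ψ, u⟫_ℂ := (hTsym i ψ u).symm
  rwa [hsym, hψ i] at hi

lemma sub_eq_zero_of_inner_sub_eq_zero (hT : IsErgodic C T) {ψ u v : X}
    (hψ : StrictlyPos C ψ) (hu : u ∈ C) (hv : v ∈ C) (hv' : ∀ i, T i v = v)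
    (huv : ⟪u, v⟫_ℂ = 0) (h : ⟪ψ, u - v⟫_ℂ = 0) : u - v = 0 := by
  rcases hT.eq_zero_or_eq_zero_of_inner_eq_zero hu hv hv' huv with rfl | rfl
  · simp [hψ.eq_zero_of_inner_eq_zero hv (by simpa using h)]
  · simp [hψ.eq_zero_of_inner_eq_zero hu (by simpa using h)]

end IsErgodic

end Ergodic

namespace IsHilbertCone

variable {X : Type*} [NormedAddCommGroup X] [InnerProductSpace ℂ X] {C : Set X}

lemma smul_mem (hC : IsHilbertCone C) {c : ℝ} (hc : 0 ≤ c) {u : X} (hu : u ∈ C) : c • u ∈ C :=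
  hC.2.2.1 c hc u hu

lemma inner_nonneg (hC : IsHilbertCone C) {u v : X} (hu : u ∈ C) (hv : v ∈ C) :
    0 ≤ ⟪u, v⟫_ℂ :=
  hC.2.2.2.1 u hu v hv

lemma exists_decomposition (hC : IsHilbertCone C) (w : X) :
    ∃ u ∈ C, ∃ v ∈ C, ∃ u' ∈ C, ∃ v' ∈ C,
      w = u - v + Complex.I • (u' - v') ∧ ⟪u, v⟫_ℂ = 0 ∧ ⟪u', v'⟫_ℂ = 0 :=
  hC.2.2.2.2 w

-- `span ℝ C` plays the role of the real vectors.
lemma im_inner_eq_zero (hC : IsHilbertCone C) {x y : X} (hx : x ∈ span ℝ C)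
    (hy : y ∈ span ℝ C) : (⟪x, y⟫_ℂ).im = 0 := by
  induction hx using Submodule.span_induction with
  | mem x hx =>
    induction hy using Submodule.span_induction with
    | mem y hy => exact (Complex.le_def.1 (hC.inner_nonneg hx hy)).2.symm
    | zero => simp
    | add y z _ _ hy hz => simp [hy, hz]
    | smul r y _ hy => simp [← Complex.coe_smul, hy]
  | zero => simp
  | add x z _ _ hx hz => simp [hx, hz]
  | smul r x _ hx => simp [← Complex.coe_smul, hx]

lemma eq_zero_of_add_I_smul_eq_zero (hC : IsHilbertCone C) {x y : X} (hx : x ∈ span ℝ C)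
    (hy : y ∈ span ℝ C) (h : x + Complex.I • y = 0) : x = 0 ∧ y = 0 := by
  have hxy : x = Complex.I • -y := by rw [smul_neg, ← neg_eq_of_add_eq_zero_left h]
  have hnorm : ‖x‖ ^ 2 = 0 := by
    rw [← inner_self_eq_norm_sq (𝕜 := ℂ), RCLike.re_to_complex]
    nth_rw 2 [hxy]
    simp [inner_smul_right, hC.im_inner_eq_zero hx hy]
  have hx0 : x = 0 := by simpa using hnorm
  refine ⟨hx0, ?_⟩
  simpa [hx0, Complex.I_ne_zero] using h

lemma map_eq_self_of_map_add_I_smul_eq_self (hC : IsHilbertCone C) {T : X →L[ℂ] X}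
    (hTC : MapsTo T C C) {x y : X} (hx : x ∈ span ℝ C) (hy : y ∈ span ℝ C)
    (h : T (x + Complex.I • y) = x + Complex.I • y) : T x = x ∧ T y = y := by
  have hspan : ∀ z ∈ span ℝ C, T z ∈ span ℝ C := fun z hz =>
    (span_le (p := (span ℝ C).comap ((T : X →ₗ[ℂ] X).restrictScalars ℝ))).2
      (fun u hu => subset_span (hTC hu)) hz
  have hsum : (T x - x) + Complex.I • (T y - y) = 0 := by
    rw [← sub_eq_zero] at h
    rw [← h, map_add, map_smul, smul_sub]
    abel
  obtain ⟨h₁, h₂⟩ := hC.eq_zero_of_add_I_smul_eq_zero (sub_mem (hspan x hx) hx)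
    (sub_mem (hspan y hy) hy) hsum
  exact ⟨sub_eq_zero.1 h₁, sub_eq_zero.1 h₂⟩

lemma map_eq_self_of_map_sub_eq_self (hC : IsHilbertCone C) {T : X →L[ℂ] X} (hT : ‖T‖ ≤ 1)
    (hTC : MapsTo T C C) {u v : X} (hu : u ∈ C) (hv : v ∈ C) (huv : ⟪u, v⟫_ℂ = 0)
    (h : T (u - v) = u - v) : T u = u ∧ T v = v := by
  -- The cross terms `⟪u, T v⟫`, `⟪v, T u⟫` have nonnegative real part and the diagonal terms
  -- real part at most `‖u‖²`, `‖v‖²`; as they add up to `‖u - v‖² = ‖u‖² + ‖v‖²`, all are sharp.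
  have hcontr : ∀ w, ‖T w‖ ≤ ‖w‖ := fun w => by simpa using T.le_of_opNorm_le hT w
  have hdiag : ∀ w, (⟪w, T w⟫_ℂ).re ≤ ‖w‖ ^ 2 := fun w => by
    have := re_inner_le_norm (𝕜 := ℂ) w (T w)
    rw [RCLike.re_to_complex] at this
    nlinarith [hcontr w, norm_nonneg w]
  have hcross : ∀ {a b : X}, a ∈ C → b ∈ C → 0 ≤ (⟪a, T b⟫_ℂ).re := fun ha hb =>
    (Complex.le_def.1 (hC.inner_nonneg ha (hTC hb))).1
  have hsum : (⟪u, T u⟫_ℂ).re + (⟪v, T v⟫_ℂ).re - (⟪u, T v⟫_ℂ).re - (⟪v, T u⟫_ℂ).re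
      = ‖u‖ ^ 2 + ‖v‖ ^ 2 := by
    have h' := congrArg (fun w => (⟪u - v, w⟫_ℂ).re) h
    simp only [map_sub, inner_sub_left, inner_sub_right, Complex.sub_re] at h'
    have hu2 := inner_self_eq_norm_sq (𝕜 := ℂ) u
    have hv2 := inner_self_eq_norm_sq (𝕜 := ℂ) v
    have hvu : ⟪v, u⟫_ℂ = 0 := by rw [← inner_conj_symm, huv, map_zero]
    rw [RCLike.re_to_complex] at hu2 hv2
    rw [huv, hvu, hu2, hv2] at h'
    simp only [Complex.zero_re] at h'
    linarith
  constructor <;> apply eq_of_norm_le_of_re_inner_eq_norm_sq (hcontr _) <;>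
    linarith [hdiag u, hdiag v, hcross hu hv, hcross hv hu]

lemma inner_eq_zero_of_inner_add_I_smul_eq_zero (hC : IsHilbertCone C) {ψ x y : X}
    (hψ : ψ ∈ C) (hx : x ∈ span ℝ C) (hy : y ∈ span ℝ C) (h : ⟪ψ, x + Complex.I • y⟫_ℂ = 0) :
    ⟪ψ, x⟫_ℂ = 0 ∧ ⟪ψ, y⟫_ℂ = 0 := by
  have hx' := hC.im_inner_eq_zero (subset_span hψ) hx
  have hy' := hC.im_inner_eq_zero (subset_span hψ) hy
  rw [inner_add_right, inner_smul_right] at h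
  simp_all [Complex.ext_iff]

variable {ι : Type*} {T : ι → X →L[ℂ] X}

lemma exists_decomposition_of_forall_map_eq (hC : IsHilbertCone C) (hTnorm : ∀ i, ‖T i‖ ≤ 1)
    (hTC : ∀ i, MapsTo (T i) C C) {χ : X} (hχ : ∀ i, T i χ = χ) :
    ∃ u ∈ C, ∃ v ∈ C, ∃ u' ∈ C, ∃ v' ∈ C,
      χ = u - v + Complex.I • (u' - v') ∧ ⟪u, v⟫_ℂ = 0 ∧ ⟪u', v'⟫_ℂ = 0 ∧
        ∀ i, T i u = u ∧ T i v = v ∧ T i u' = u' ∧ T i v' = v' := by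
  obtain ⟨u, hu, v, hv, u', hu', v', hv', rfl, huv, hu'v'⟩ := hC.exists_decomposition χ
  refine ⟨u, hu, v, hv, u', hu', v', hv', rfl, huv, hu'v', fun i => ?_⟩
  obtain ⟨hre, him⟩ := hC.map_eq_self_of_map_add_I_smul_eq_self (hTC i)
    (sub_mem (subset_span hu) (subset_span hv)) (sub_mem (subset_span hu') (subset_span hv'))
    (hχ i)
  obtain ⟨hu, hv⟩ := hC.map_eq_self_of_map_sub_eq_self (hTnorm i) (hTC i) hu hv huv hre
  obtain ⟨hu', hv'⟩ := hC.map_eq_self_of_map_sub_eq_self (hTnorm i) (hTC i) hu' hv' hu'v' him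
  exact ⟨hu, hv, hu', hv'⟩

lemma exists_mem_ne_zero_forall_map_eq (hC : IsHilbertCone C) (hTnorm : ∀ i, ‖T i‖ ≤ 1)
    (hTC : ∀ i, MapsTo (T i) C C) {φ : X} (hφ0 : φ ≠ 0) (hφ : ∀ i, T i φ = φ) :
    ∃ ψ ∈ C, ψ ≠ 0 ∧ ∀ i, T i ψ = ψ := by
  obtain ⟨u, hu, v, hv, u', hu', v', hv', rfl, -, -, hfix⟩ :=
    hC.exists_decomposition_of_forall_map_eq hTnorm hTC hφ
  by_contra! h
  have hzero : ∀ w ∈ C, (∀ i, T i w = w) → w = 0 := fun w hw hw' =>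
    by_contra fun hw0 => let ⟨i, hi⟩ := h w hw hw0; hi (hw' i)
  apply hφ0
  rw [hzero u hu fun i => (hfix i).1, hzero v hv fun i => (hfix i).2.1,
    hzero u' hu' fun i => (hfix i).2.2.1, hzero v' hv' fun i => (hfix i).2.2.2]
  simp

lemma eq_zero_of_forall_map_eq_of_inner_eq_zero (hC : IsHilbertCone C)
    (hTnorm : ∀ i, ‖T i‖ ≤ 1) (hT : IsErgodic C T) {ψ : X} (hψC : ψ ∈ C)
    (hψ : StrictlyPos C ψ) {χ : X} (hχ : ∀ i, T i χ = χ) (hψχ : ⟪ψ, χ⟫_ℂ = 0) : χ = 0 := by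
  obtain ⟨u, hu, v, hv, u', hu', v', hv', rfl, huv, hu'v', hfix⟩ :=
    hC.exists_decomposition_of_forall_map_eq hTnorm hT.1 hχ
  obtain ⟨hre, him⟩ := hC.inner_eq_zero_of_inner_add_I_smul_eq_zero hψC
    (sub_mem (subset_span hu) (subset_span hv)) (sub_mem (subset_span hu') (subset_span hv')) hψχ
  rw [hT.sub_eq_zero_of_inner_sub_eq_zero hψ hu hv (fun i => (hfix i).2.1) huv hre,
    hT.sub_eq_zero_of_inner_sub_eq_zero hψ hu' hv' (fun i => (hfix i).2.2.2) hu'v' him]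
  simp

theorem exists_strictlyPos_forall_map_eq_iff_mem_span (hC : IsHilbertCone C)
    (hTnorm : ∀ i, ‖T i‖ ≤ 1) (hTsym : ∀ i, (T i : X →ₗ[ℂ] X).IsSymmetric)
    (hT : IsErgodic C T) {φ : X} (hφ0 : φ ≠ 0) (hφ : ∀ i, T i φ = φ) :
    ∃ ψ, ψ ≠ 0 ∧ StrictlyPos C ψ ∧ ∀ χ, (∀ i, T i χ = χ) ↔ χ ∈ span ℂ {ψ} := by
  obtain ⟨ψ, hψC, hψ0, hψ⟩ := hC.exists_mem_ne_zero_forall_map_eq hTnorm hT.1 hφ0 hφ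
  have hψpos := hT.strictlyPos_of_forall_map_eq hTsym hψC hψ0 hψ
  refine ⟨ψ, hψ0, hψpos, fun χ => ⟨fun hχ => ?_, fun hχ i => ?_⟩⟩
  · set c := ⟪ψ, χ⟫_ℂ / ⟪ψ, ψ⟫_ℂ
    have hperp : ⟪ψ, χ - c • ψ⟫_ℂ = 0 := by
      rw [inner_sub_right, inner_smul_right, div_mul_cancel₀ _ (inner_self_ne_zero.2 hψ0),
        sub_self]
    have hzero := hC.eq_zero_of_forall_map_eq_of_inner_eq_zero hTnorm hT hψC hψpos
      (χ := χ - c • ψ) (fun i => by simp [hχ i, hψ i]) hperp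
    exact mem_span_singleton.2 ⟨c, (sub_eq_zero.1 hzero).symm⟩
  · obtain ⟨a, rfl⟩ := mem_span_singleton.1 hχ
    simp [hψ i]

lemma isErgodic_exp_neg_smul_sub [CompleteSpace X] (hC : IsHilbertCone C) {A : X →L[ℂ] X}
    (E : ℝ) (h₁ : ∀ t : ℝ, 0 ≤ t → ∀ u ∈ C, exp (-((t : ℂ) • A)) u ∈ C)
    (h₂ : ∀ u ∈ C, u ≠ 0 → ∀ v ∈ C, v ≠ 0 → ∃ t : ℝ, 0 ≤ t ∧ 0 < ⟪u, exp (-((t : ℂ) • A)) v⟫_ℂ) :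
    IsErgodic C fun t : ℝ≥0 => exp (-((t : ℝ) • (A - algebraMap ℝ _ E))) := by
  have hscale (t : ℝ) :
      exp (-((t : ℂ) • A)) = Real.exp (-(t * E)) • exp (-(t • (A - algebraMap ℝ _ E))) := by
    rw [← exp_add_algebraMap, Complex.coe_smul]
    congr 1
    simp only [Algebra.algebraMap_eq_smul_one]
    module
  refine ⟨fun t u hu => ?_, fun u hu hu0 v hv hv0 => ?_⟩
  · have h := hC.smul_mem (Real.exp_nonneg (t * E)) (h₁ t t.2 u hu)
    rwa [hscale, smul_apply, smul_smul, ← Real.exp_add, add_neg_cancel, Real.exp_zero,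
      one_smul] at h
  · obtain ⟨t, ht, hpos⟩ := h₂ u hu hu0 v hv hv0
    rw [hscale, smul_apply, ← Complex.coe_smul, inner_smul_right] at hpos
    exact ⟨⟨t, ht⟩, pos_of_mul_pos_right hpos (by positivity)⟩

end IsHilbertCone

theorem perron_frobenius_faris_general
    {X : Type*} [NormedAddCommGroup X] [InnerProductSpace ℂ X] [CompleteSpace X]
    (C : Set X) (hC : IsHilbertCone C) (A : X →L[ℂ] X) (hAsa : IsSelfAdjoint A)
    (E : ℝ) (hE : IsGLB {r : ℝ | (r : ℂ) ∈ spectrum ℂ A} E)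
    (hEig : ∃ φ : X, φ ≠ 0 ∧ A φ = (E : ℂ) • φ)
    (hergodic₁ : ∀ t : ℝ, 0 ≤ t → ∀ u ∈ C, NormedSpace.exp (-((t : ℂ) • A)) u ∈ C)
    (hergodic₂ : ∀ u ∈ C, u ≠ 0 → ∀ v ∈ C, v ≠ 0 →
      ∃ t : ℝ, 0 ≤ t ∧ (0 : ℂ) < (inner ℂ u (NormedSpace.exp (-((t : ℂ) • A)) v) : ℂ)) :
    ∃ ψ : X, ψ ≠ 0 ∧ StrictlyPos C ψ ∧
      LinearMap.ker ((A - (E : ℂ) • (1 : X →L[ℂ] X) : X →L[ℂ] X) : X →ₗ[ℂ] X) = Submodule.span ℂ {ψ} := by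
  set B : X →L[ℂ] X := A - algebraMap ℝ _ E with hB
  have hBE : A - (E : ℂ) • 1 = B := by rw [hB, Algebra.algebraMap_eq_smul_one, Complex.coe_smul]
  have hB0 : 0 ≤ B := sub_algebraMap_nonneg_of_mem_lowerBounds_spectrum hAsa hE.1
  let T : ℝ≥0 → X →L[ℂ] X := fun t => exp (-((t : ℝ) • B))
  have hfix (χ : X) : (∀ t, T t χ = χ) ↔ B χ = 0 :=
    ⟨fun h => apply_eq_zero_of_forall_exp_neg_smul_apply_eq fun t ht => h ⟨t, ht⟩,
      fun h t => exp_apply_eq_self_of_apply_eq_zero (by simp [h])⟩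
  obtain ⟨φ, hφ0, hφ⟩ := hEig
  obtain ⟨ψ, hψ0, hψpos, hψ⟩ := hC.exists_strictlyPos_forall_map_eq_iff_mem_span (T := T)
    (fun t => norm_exp_le_one_of_nonpos (neg_nonpos.2 (smul_nonneg t.2 hB0)))
    (fun t => ((IsSelfAdjoint.all (t : ℝ)).smul hB0.isSelfAdjoint).neg.exp.isSymmetric)
    (hC.isErgodic_exp_neg_smul_sub E hergodic₁ hergodic₂) hφ0
    ((hfix φ).2 (by simp [← hBE, hφ]))
  refine ⟨ψ, hψ0, hψpos, Submodule.ext fun χ => ?_⟩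
  rw [hBE, LinearMap.mem_ker, ContinuousLinearMap.coe_coe, ← hfix, hψ]

theorem perron_frobenius_faris
    {X : Type*} [NormedAddCommGroup X] [InnerProductSpace ℂ X] [CompleteSpace X] [Nontrivial X]
    (C : Set X) (hC : IsHilbertCone C) (A : X →L[ℂ] X) (hAsa : IsSelfAdjoint A)
    (E : ℝ) (hE : IsGLB {r : ℝ | (r : ℂ) ∈ spectrum ℂ A} E)
    (hEig : ∃ φ : X, φ ≠ 0 ∧ A φ = (E : ℂ) • φ)
    (hergodic₁ : ∀ t : ℝ, 0 ≤ t → ∀ u ∈ C, NormedSpace.exp (-((t : ℂ) • A)) u ∈ C)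
    (hergodic₂ : ∀ u ∈ C, u ≠ 0 → ∀ v ∈ C, v ≠ 0 →
      ∃ t : ℝ, 0 ≤ t ∧ (0 : ℂ) < (inner ℂ u (NormedSpace.exp (-((t : ℂ) • A)) v) : ℂ)) :
    ∃ ψ : X, ψ ≠ 0 ∧ StrictlyPos C ψ ∧
      LinearMap.ker ((A - (E : ℂ) • (1 : X →L[ℂ] X) : X →L[ℂ] X) : X →ₗ[ℂ] X) = Submodule.span ℂ {ψ} :=
  perron_frobenius_faris_general C hC A hAsa E hE hEig hergodic₁ hergodic₂
end

section
/- Under the standing assumptions, 𝒜 = 𝒬; that is, the set of F ∈ L²(M, μ; X) with F(x) ∈ C for μ-a.e. x coincides with the closure of the conical hull of the set of functions x ↦ f(x)·φ with φ ∈ C and f ∈ L²(M, μ; ℂ) satisfying f(x) ≥ 0 for μ-a.e. x. -/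
/-!
Both sides are closed convex cones. The left one is closed because an `L²`-convergent sequence
has an a.e.-convergent subsequence and `C` is closed, and it contains the generators
`f • φ` because a nonnegative complex number acts on `X` as a nonnegative real one.
Conversely, an `L²` function with values a.e. in `C` is the `L²`-limit of simple functions with
values in `C`, and a simple function `g = ∑ y • 1_{g = y}` is a conical combination of
generators `1_{g = y} • y`.
-/

open scoped ComplexOrder
open MeasureTheory

/-- The conical hull of a set: all finite sums with nonnegative real coefficients. -/
def conicalCombinations {V : Type*} [AddCommMonoid V] [Module ℝ V] (s : Set V) : Set V :=
  {v | ∃ (k : ℕ) (a : Fin k → ℝ) (x : Fin k → V),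
    (∀ i, 0 ≤ a i) ∧ (∀ i, x i ∈ s) ∧ v = ∑ i, a i • x i}

open Filter Set TopologicalSpace
open scoped ENNReal Topology

namespace IsHilbertCone

variable {X : Type*} [NormedAddCommGroup X] [InnerProductSpace ℂ X] {C : Set X}

theorem zero_mem (hC : IsHilbertCone C) : (0 : X) ∈ C := by
  obtain ⟨u, hu, -⟩ := hC.2.2.2.2 0
  simpa using hC.2.2.1 0 le_rfl u hu

theorem add_mem (hC : IsHilbertCone C) {u v : X} (hu : u ∈ C) (hv : v ∈ C) : u + v ∈ C := by
  have hmid : (2⁻¹ : ℝ) • u + (2⁻¹ : ℝ) • v ∈ C :=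
    hC.2.1 hu hv (by norm_num) (by norm_num) (by norm_num)
  simpa [smul_add, smul_smul] using hC.2.2.1 2 zero_le_two _ hmid

def toPointedCone (hC : IsHilbertCone C) : PointedCone ℝ X where
  carrier := C
  add_mem' := hC.add_mem
  zero_mem' := hC.zero_mem
  smul_mem' c _ hx := hC.2.2.1 c c.2 _ hx

end IsHilbertCone

theorem PointedCone.complex_smul_mem {X : Type*} [AddCommGroup X] [Module ℂ X]
    (K : PointedCone ℝ X) {z : ℂ} (hz : 0 ≤ z) {x : X} (hx : x ∈ K) : z • x ∈ K := by
  rw [← Complex.re_add_im z, ← (Complex.nonneg_iff.mp hz).2, Complex.ofReal_zero, zero_mul,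
    add_zero, Complex.coe_smul]
  exact K.smul_mem (Complex.nonneg_iff.mp hz).1 hx

section conicalCombinations

variable {V : Type*} [AddCommMonoid V] [Module ℝ V] {s : Set V}

theorem conicalCombinations_subset {K : PointedCone ℝ V} (h : s ⊆ K) :
    conicalCombinations s ⊆ K := by
  rintro _ ⟨k, a, x, ha, hx, rfl⟩
  exact K.sum_mem fun i _ => K.smul_mem (ha i) (h (hx i))

theorem sum_mem_conicalCombinations {ι : Type*} {t : Finset ι} {x : ι → V}
    (hx : ∀ i ∈ t, x i ∈ s) : ∑ i ∈ t, x i ∈ conicalCombinations s := by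
  refine ⟨t.card, fun _ => 1, fun j => x (t.equivFin.symm j), fun _ => zero_le_one,
    fun j => hx _ (t.equivFin.symm j).2, ?_⟩
  simp only [one_smul]
  rw [Equiv.sum_comp t.equivFin.symm (fun j => x j), Finset.sum_coe_sort t x]

end conicalCombinations

namespace MeasureTheory

variable {α E : Type*} [MeasurableSpace α] {μ : Measure α} {p : ℝ≥0∞}
  [NormedAddCommGroup E]

def _root_.PointedCone.aeLp [NormedSpace ℝ E] (K : PointedCone ℝ E) (p : ℝ≥0∞)
    (μ : Measure α) : PointedCone ℝ (Lp E p μ) where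
  carrier := {F | ∀ᵐ x ∂μ, F x ∈ K}
  add_mem' {F G} hF hG := by
    filter_upwards [hF, hG, Lp.coeFn_add F G] with x hFx hGx hx
    rw [hx]
    exact K.add_mem hFx hGx
  zero_mem' := by
    filter_upwards [Lp.coeFn_zero E p μ] with x hx
    rw [hx]
    exact K.zero_mem
  smul_mem' c F hF := by
    filter_upwards [hF, Lp.coeFn_smul (c : ℝ) F] with x hFx hx
    rw [← Nonneg.coe_smul, hx]
    exact K.smul_mem c.2 hFx

theorem Lp.isClosed_setOf_ae_mem [Fact (1 ≤ p)] {s : Set E} (hs : IsClosed s) :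
    IsClosed {F : Lp E p μ | ∀ᵐ x ∂μ, F x ∈ s} := by
  refine IsSeqClosed.isClosed fun F F₀ hF hlim => ?_
  obtain ⟨φ, -, hφ⟩ := (tendstoInMeasure_of_tendsto_Lp hlim).exists_seq_tendsto_ae
  filter_upwards [ae_all_iff.mpr hF, hφ] with x hFx hφx
  exact hs.mem_of_tendsto hφx (Eventually.of_forall fun n => hFx (φ n))

theorem Lp.mem_closure_setOf_toLp_simpleFunc [Fact (1 ≤ p)] (hp : p ≠ ∞) {s : Set E}
    (h0 : (0 : E) ∈ s) {F : Lp E p μ} (hF : ∀ᵐ x ∂μ, F x ∈ s) :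
    F ∈ closure {G : Lp E p μ |
      ∃ (g : SimpleFunc α E) (hg : MemLp g p μ), (∀ x, g x ∈ s) ∧ G = hg.toLp g} := by
  borelize E
  -- `approxOn` needs a separable target; the range of an `Lp` representative is separable.
  set t := s ∩ (range F ∪ {0})
  have : SeparableSpace t :=
    ((Lp.stronglyMeasurable F).isSeparable_range.union (finite_singleton 0).isSeparable
      |>.mono inter_subset_right).separableSpace
  have hF_meas := (Lp.stronglyMeasurable F).measurable
  have h0t : (0 : E) ∈ t := ⟨h0, Or.inr rfl⟩
  let g n := SimpleFunc.approxOn F hF_meas t 0 h0t n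
  have hg n : MemLp (g n) p μ := SimpleFunc.memLp_approxOn hF_meas (Lp.memLp F) h0t .zero n
  have hlim : Tendsto (fun n => (hg n).toLp (g n)) atTop (𝓝 ((Lp.memLp F).toLp F)) := by
    rw [Lp.tendsto_Lp_iff_tendsto_eLpNorm'']
    refine SimpleFunc.tendsto_approxOn_Lp_eLpNorm hF_meas h0t hp ?_
      (by simpa using (Lp.memLp F).2)
    filter_upwards [hF] with x hx using subset_closure ⟨hx, Or.inl (mem_range_self x)⟩
  rw [Lp.toLp_coeFn] at hlim
  exact mem_closure_of_tendsto hlim <| Eventually.of_forall fun n =>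
    ⟨g n, hg n, fun x => (SimpleFunc.approxOn_mem hF_meas h0t n x).1, rfl⟩

section Complex

variable {X : Type*} [NormedAddCommGroup X] [NormedSpace ℂ X]

def nonnegSMulConst (C : Set X) (p : ℝ≥0∞) (μ : Measure α) : Set (Lp X p μ) :=
  {G | ∃ φ ∈ C, ∃ f : Lp ℂ p μ, (∀ᵐ x ∂μ, (0 : ℂ) ≤ f x) ∧ (∀ᵐ x ∂μ, G x = f x • φ)}

theorem nonnegSMulConst_subset_aeLp (K : PointedCone ℝ X) :
    nonnegSMulConst (K : Set X) p μ ⊆ K.aeLp p μ := by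
  rintro G ⟨φ, hφ, f, hf, hG⟩
  filter_upwards [hf, hG] with x hfx hGx
  rw [hGx]
  exact K.complex_smul_mem hfx hφ

theorem toLp_indicator_const_mem_nonnegSMulConst {C : Set X} {A : Set α}
    (hA : MeasurableSet A) {φ : X} (hφ : φ ∈ C) (hφA : φ = 0 ∨ μ A ≠ ∞) :
    (memLp_indicator_const p hA φ hφA).toLp _ ∈ nonnegSMulConst C p μ := by
  rcases hφA with rfl | hμA
  · refine ⟨0, hφ, 0, ?_, ?_⟩
    · filter_upwards [Lp.coeFn_zero ℂ p μ] with x hx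
      rw [hx, Pi.zero_apply]
    · filter_upwards [MemLp.coeFn_toLp (memLp_indicator_const p hA (0 : X) (.inl rfl))]
        with x hx
      rw [hx, smul_zero, Set.indicator_zero]
  · refine ⟨φ, hφ, indicatorConstLp p hA hμA 1, ?_, ?_⟩
    · filter_upwards [indicatorConstLp_coeFn (p := p) (hs := hA) (hμs := hμA) (c := (1 : ℂ))]
        with x hx
      rw [hx]
      exact Set.indicator_nonneg (fun _ _ => zero_le_one) x
    · filter_upwards [MemLp.coeFn_toLp (memLp_indicator_const p hA φ (.inr hμA)),
        indicatorConstLp_coeFn (p := p) (hs := hA) (hμs := hμA) (c := (1 : ℂ))] with x hφx h1x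
      rw [hφx, h1x]
      by_cases hx : x ∈ A <;> simp [hx]

end Complex

namespace SimpleFunc

theorem eq_zero_or_measure_fiber_ne_top (hp₀ : p ≠ 0) (hp : p ≠ ∞) {g : SimpleFunc α E}
    (hg : MemLp g p μ) (y : E) : y = 0 ∨ μ (g ⁻¹' {y}) ≠ ∞ :=
  (eq_or_ne y 0).imp_right fun hy => (g.measure_preimage_lt_top_of_memLp hp₀ hp hg y hy).ne

theorem toLp_eq_sum_toLp_indicator_fiber (hp₀ : p ≠ 0) (hp : p ≠ ∞) {g : SimpleFunc α E}
    (hg : MemLp g p μ) :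
    hg.toLp g = ∑ y ∈ g.range, (memLp_indicator_const p (g.measurableSet_fiber y) y
      (eq_zero_or_measure_fiber_ne_top hp₀ hp hg y)).toLp _ := by
  ext1
  filter_upwards [hg.coeFn_toLp, Lp.coeFn_finsetSum (E := E) g.range _,
    (eventually_all_finset g.range).mpr fun y _ =>
      (memLp_indicator_const p (g.measurableSet_fiber y) y
        (eq_zero_or_measure_fiber_ne_top hp₀ hp hg y)).coeFn_toLp] with x hgx hsumx hfiberx
  rw [hgx, hsumx, Finset.sum_apply, Finset.sum_congr rfl hfiberx,
    Finset.sum_eq_single_of_mem (g x) (g.mem_range_self x) fun y _ hy => ?_]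
  · exact (Set.indicator_of_mem (s := g ⁻¹' {g x}) rfl _).symm
  · exact Set.indicator_of_notMem (s := g ⁻¹' {y}) hy.symm _

theorem toLp_mem_conicalCombinations_nonnegSMulConst [NormedSpace ℂ E] (hp₀ : p ≠ 0)
    (hp : p ≠ ∞) {C : Set E} {g : SimpleFunc α E} (hg : MemLp g p μ) (hgC : ∀ x, g x ∈ C) :
    hg.toLp g ∈ conicalCombinations (nonnegSMulConst C p μ) := by
  rw [toLp_eq_sum_toLp_indicator_fiber hp₀ hp hg]
  refine sum_mem_conicalCombinations fun y hy => ?_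
  refine toLp_indicator_const_mem_nonnegSMulConst (g.measurableSet_fiber y) ?_
    (eq_zero_or_measure_fiber_ne_top hp₀ hp hg y)
  obtain ⟨x, rfl⟩ := g.mem_range.mp hy
  exact hgC x

end SimpleFunc

end MeasureTheory

theorem ae_cone_eq_closure_coni_general
    {M : Type*} [MeasurableSpace M] (μ : Measure M)
    {X : Type*} [NormedAddCommGroup X] [InnerProductSpace ℂ X]
    (C : Set X) (hC : IsHilbertCone C) :
    {F : Lp X 2 μ | ∀ᵐ x ∂μ, F x ∈ C} =
      closure (conicalCombinations
        {G : Lp X 2 μ | ∃ φ ∈ C, ∃ f : Lp ℂ 2 μ,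
          (∀ᵐ x ∂μ, (0 : ℂ) ≤ f x) ∧ (∀ᵐ x ∂μ, G x = f x • φ)}) := by
  have h2 : (2 : ℝ≥0∞) ≠ ∞ := ENNReal.ofNat_ne_top
  refine Subset.antisymm (fun F hF => ?_) ?_
  · refine closure_mono ?_ (Lp.mem_closure_setOf_toLp_simpleFunc h2 hC.zero_mem hF)
    rintro _ ⟨g, hg, hgC, rfl⟩
    exact SimpleFunc.toLp_mem_conicalCombinations_nonnegSMulConst two_ne_zero h2 hg hgC
  · exact closure_minimal
      (conicalCombinations_subset (nonnegSMulConst_subset_aeLp hC.toPointedCone))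
      (Lp.isClosed_setOf_ae_mem hC.1)

theorem ae_cone_eq_closure_coni
    {M : Type*} [MeasurableSpace M] (μ : Measure M) [SigmaFinite μ]
    [TopologicalSpace.SeparableSpace (Lp ℂ 2 μ)]
    {X : Type*} [NormedAddCommGroup X] [InnerProductSpace ℂ X] [CompleteSpace X]
    [TopologicalSpace.SeparableSpace X]
    (C : Set X) (hC : IsHilbertCone C) :
    {F : Lp X 2 μ | ∀ᵐ x ∂μ, F x ∈ C} =
      closure (conicalCombinations
        {G : Lp X 2 μ | ∃ φ ∈ C, ∃ f : Lp ℂ 2 μ,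
          (∀ᵐ x ∂μ, (0 : ℂ) ≤ f x) ∧ (∀ᵐ x ∂μ, G x = f x • φ)}) :=
  ae_cone_eq_closure_coni_general μ C hC
end

section
/- Let X be a complex Hilbert space, C a Hilbert cone in X, and P an orthogonal projection on X such that P(C) ⊆ C. Then P(C) = C ∩ ran(P), and P(C) is a Hilbert cone in the complex Hilbert space ran(P) (the closed range of P). -/
open scoped ComplexOrder

/-! Applying `P` to a decomposition `w = u - v + i (u' - v')` of `w ∈ ran P` gives
`w = (P u - P v) + i (P u' - P v')`. A difference `p - q` of elements of `C` has an orthogonal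
decomposition `a - b` in `C`: the imaginary part `d` of a decomposition of `p - q` satisfies
`⟪i d, d⟫ = -i ‖d‖²`, while inner products of differences of elements of `C` are real.
If moreover `P (p - q) = p - q`, then `r := a - P a = b - P b` has
`‖r‖² = ⟪a, b⟫ - ⟪a, P b⟫ = -⟪a, P b⟫ ≤ 0`, so `a` and `b` lie in `ran P`. -/

open scoped InnerProductSpace

namespace LinearMap.IsSymmetricProjection

variable {X : Type*} [NormedAddCommGroup X] [InnerProductSpace ℂ X]

lemma inner_map_sub_map_eq_zero {T : X →ₗ[ℂ] X}
    (hT : T.IsSymmetricProjection) (x y : X) : ⟪T x, y - T y⟫_ℂ = 0 := by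
  rw [hT.isSymmetric, map_sub, ← Module.End.mul_apply, hT.isIdempotentElem.eq, sub_self,
    inner_zero_right]

lemma map_eq_self_of_inner_eq_zero {T : X →ₗ[ℂ] X}
    (hT : T.IsSymmetricProjection) {a b : X} (hab : ⟪a, b⟫_ℂ = 0)
    (hpos : 0 ≤ (⟪a, T b⟫_ℂ).re) (hfix : T (a - b) = a - b) : T a = a ∧ T b = b := by
  have hr : a - T a = b - T b := by
    rw [map_sub] at hfix
    rw [sub_eq_sub_iff_sub_eq_sub, ← hfix]
  have hnorm : ‖a - T a‖ ^ 2 = -(⟪a, T b⟫_ℂ).re := by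
    rw [← inner_self_eq_norm_sq (𝕜 := ℂ)]
    nth_rewrite 2 [hr]
    rw [inner_sub_left, hT.inner_map_sub_map_eq_zero, sub_zero, inner_sub_right, hab, zero_sub,
      map_neg, RCLike.re_to_complex]
  have ha : a - T a = 0 := by
    rw [← norm_eq_zero]
    nlinarith [norm_nonneg (a - T a)]
  exact ⟨(sub_eq_zero.mp ha).symm, (sub_eq_zero.mp (hr ▸ ha)).symm⟩

end LinearMap.IsSymmetricProjection

namespace IsHilbertCone

variable {X : Type*} [NormedAddCommGroup X] [InnerProductSpace ℂ X] {C : Set X}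

lemma im_inner_eq_zero_s13 (hC : IsHilbertCone C) {u v : X} (hu : u ∈ C) (hv : v ∈ C) :
    (⟪u, v⟫_ℂ).im = 0 :=
  (Complex.le_def.mp (hC.2.2.2.1 u hu v hv)).2.symm

lemma im_inner_sub_sub_eq_zero (hC : IsHilbertCone C) {p q r s : X}
    (hp : p ∈ C) (hq : q ∈ C) (hr : r ∈ C) (hs : s ∈ C) :
    (⟪p - q, r - s⟫_ℂ).im = 0 := by
  simp only [inner_sub_left, inner_sub_right, Complex.sub_im, hC.im_inner_eq_zero_s13 hp hr,
    hC.im_inner_eq_zero_s13 hp hs, hC.im_inner_eq_zero_s13 hq hr, hC.im_inner_eq_zero_s13 hq hs, sub_zero]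

lemma exists_sub_eq_sub_inner_eq_zero (hC : IsHilbertCone C) {p q : X}
    (hp : p ∈ C) (hq : q ∈ C) :
    ∃ a ∈ C, ∃ b ∈ C, p - q = a - b ∧ ⟪a, b⟫_ℂ = 0 := by
  obtain ⟨a, ha, b, hb, a', ha', b', hb', hdec, hab, -⟩ := hC.2.2.2.2 (p - q)
  set d := a' - b'
  have hId : Complex.I • d = (p - q) - (a - b) := by rw [hdec]; abel
  have him : (⟪Complex.I • d, d⟫_ℂ).im = 0 := by
    rw [hId, inner_sub_left, Complex.sub_im, hC.im_inner_sub_sub_eq_zero hp hq ha' hb',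
      hC.im_inner_sub_sub_eq_zero ha hb ha' hb', sub_zero]
  rw [inner_smul_left, Complex.conj_I, inner_self_eq_norm_sq_to_K] at him
  have hd : d = 0 := by simpa [← Complex.ofReal_pow] using him
  refine ⟨a, ha, b, hb, ?_, hab⟩
  rw [hdec, hd, smul_zero, add_zero]

lemma exists_sub_eq_sub_inner_eq_zero_of_map_eq_self (hC : IsHilbertCone C)
    {T : X →ₗ[ℂ] X} (hT : T.IsSymmetricProjection) (hTC : ∀ u ∈ C, T u ∈ C) {p q : X}
    (hp : p ∈ C) (hq : q ∈ C) (hfix : T (p - q) = p - q) :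
    ∃ a ∈ C, ∃ b ∈ C, T a = a ∧ T b = b ∧ p - q = a - b ∧ ⟪a, b⟫_ℂ = 0 := by
  obtain ⟨a, ha, b, hb, hpq, hab⟩ := hC.exists_sub_eq_sub_inner_eq_zero hp hq
  have hpos : 0 ≤ (⟪a, T b⟫_ℂ).re := (Complex.le_def.mp (hC.2.2.2.1 a ha _ (hTC b hb))).1
  obtain ⟨hTa, hTb⟩ := hT.map_eq_self_of_inner_eq_zero hab hpos (hpq ▸ hfix)
  exact ⟨a, ha, b, hb, hTa, hTb, hpq, hab⟩

lemma preimage_subtype (hC : IsHilbertCone C) (K : Submodule ℂ X)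
    (hdec : ∀ w ∈ K, ∃ u ∈ C ∩ K, ∃ v ∈ C ∩ K, ∃ u' ∈ C ∩ K, ∃ v' ∈ C ∩ K,
      w = u - v + Complex.I • (u' - v') ∧ ⟪u, v⟫_ℂ = 0 ∧ ⟪u', v'⟫_ℂ = 0) :
    IsHilbertCone {v : K | (v : X) ∈ C} := by
  obtain ⟨hclosed, hconvex, hsmul, hpos, -⟩ := hC
  refine ⟨hclosed.preimage continuous_subtype_val,
    hconvex.linear_preimage (K.subtype.restrictScalars ℝ),
    fun c hc u hu => hsmul c hc _ hu, fun u hu v hv => hpos _ hu _ hv, fun w => ?_⟩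
  obtain ⟨u, ⟨hu, huK⟩, v, ⟨hv, hvK⟩, u', ⟨hu', hu'K⟩, v', ⟨hv', hv'K⟩, hw, huv, huv'⟩ :=
    hdec w w.2
  exact ⟨⟨u, huK⟩, hu, ⟨v, hvK⟩, hv, ⟨u', hu'K⟩, hu', ⟨v', hv'K⟩, hv', Subtype.ext hw, huv, huv'⟩

end IsHilbertCone

theorem proj_cone_isHilbertCone
    {X : Type*} [NormedAddCommGroup X] [InnerProductSpace ℂ X] [CompleteSpace X]
    (C : Set X) (hC : IsHilbertCone C) (P : X →L[ℂ] X)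
    (hidem : P ∘L P = P) (hsa : IsSelfAdjoint P) (hP : ∀ u ∈ C, P u ∈ C) :
    P '' C = C ∩ Set.range P ∧
      IsHilbertCone {v : LinearMap.range (P : X →ₗ[ℂ] X) | (v : X) ∈ C} := by
  have hT : (P : X →ₗ[ℂ] X).IsSymmetricProjection :=
    ContinuousLinearMap.isStarProjection_iff_isSymmetricProjection.mp ⟨hidem, hsa⟩
  have hPP (x : X) : P (P x) = P x := DFunLike.congr_fun hidem x
  refine ⟨?_, hC.preimage_subtype _ fun w hw => ?_⟩
  · ext x
    constructor
    · rintro ⟨y, hy, rfl⟩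
      exact ⟨hP y hy, y, rfl⟩
    · rintro ⟨hx, y, rfl⟩
      exact ⟨P y, hx, hPP y⟩
  obtain ⟨y, rfl⟩ := hw
  obtain ⟨u, hu, v, hv, u', hu', v', hv', hy, -, -⟩ := hC.2.2.2.2 y
  have hdecomp (p q : X) (hp : p ∈ C) (hq : q ∈ C) :=
    hC.exists_sub_eq_sub_inner_eq_zero_of_map_eq_self hT hP (hP p hp) (hP q hq)
      (by simp [hPP])
  obtain ⟨a, ha, b, hb, hPa, hPb, hab, hab0⟩ := hdecomp u v hu hv
  obtain ⟨a', ha', b', hb', hPa', hPb', hab', hab'0⟩ := hdecomp u' v' hu' hv'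
  refine ⟨a, ⟨ha, a, hPa⟩, b, ⟨hb, b, hPb⟩, a', ⟨ha', a', hPa'⟩, b', ⟨hb', b', hPb'⟩, ?_,
    hab0, hab'0⟩
  rw [← hab, ← hab', hy]
  simp
end

section
/- Let X be a complex Hilbert space, C a Hilbert cone in X, S a bounded self-adjoint operator on X, and let V₁, V₂ be unitary operators on X with V₁·S = S·V₁. Suppose ψ_A ∈ C \ {0}, ψ_B ∈ X is strictly positive with respect to C, and S(V₁V₂ψ_A) = α·V₁V₂ψ_A and S(V₂ψ_B) = β·V₂ψ_B for scalars α, β ∈ ℂ. Then S(V₂ψ_A) = α·V₂ψ_A, ⟨V₂ψ_A, V₂ψ_B⟩ = ⟨ψ_A, ψ_B⟩ > 0, and α = β. -/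
open scoped ComplexOrder

/-! Since `V₁` is injective and commutes with `S`, the vector `V₂ ψA` is already an eigenvector
of `S` for `α`. The unitary `V₂` preserves the overlap `⟪ψA, ψB⟫`, which strict positivity makes
nonzero, and eigenvectors of a self-adjoint operator with nonzero overlap share their eigenvalue. -/

open scoped InnerProductSpace

lemma StrictlyPos.inner_pos {X : Type*} [NormedAddCommGroup X] [InnerProductSpace ℂ X]
    {C : Set X} {v u : X} (hv : StrictlyPos C v) (hu : u ∈ C) (hu₀ : u ≠ 0) :
    0 < ⟪u, v⟫_ℂ := by
  rw [← inner_conj_symm]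
  exact star_pos_iff.mpr (hv u hu hu₀)

lemma ContinuousLinearMap.apply_eq_smul_of_commute_of_injective {R M : Type*} [Semiring R]
    [TopologicalSpace M] [AddCommMonoid M] [Module R M] {S V : M →L[R] M}
    (hV : Function.Injective V) (hVS : V ∘L S = S ∘L V) {x : M} {a : R}
    (hx : S (V x) = a • V x) : S x = a • x :=
  hV <| by
    rw [← ContinuousLinearMap.comp_apply, hVS, ContinuousLinearMap.comp_apply, hx, map_smul]

lemma LinearMap.IsSymmetric.eq_of_inner_ne_zero {𝕜 E : Type*} [RCLike 𝕜] [NormedAddCommGroup E]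
    [InnerProductSpace 𝕜 E] {T : E →ₗ[𝕜] E} (hT : T.IsSymmetric) {x y : E} {a b : 𝕜}
    (hx : T x = a • x) (hy : T y = b • y) (hxy : ⟪x, y⟫_𝕜 ≠ 0) : a = b := by
  by_contra hab
  exact hxy <| hT.orthogonalFamily_eigenspaces hab
    ⟨x, Module.End.mem_eigenspace_iff.mpr hx⟩ ⟨y, Module.End.mem_eigenspace_iff.mpr hy⟩

theorem overlap_with_unitaries_general
    {X : Type*} [NormedAddCommGroup X] [InnerProductSpace ℂ X] [CompleteSpace X]
    (C : Set X) (S : X →L[ℂ] X) (hS : IsSelfAdjoint S)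
    (V₁ V₂ : X →L[ℂ] X) (hV₁ : V₁ ∈ unitary (X →L[ℂ] X)) (hV₂ : V₂ ∈ unitary (X →L[ℂ] X))
    (hcomm : V₁ ∘L S = S ∘L V₁)
    (ψA ψB : X) (hψA : ψA ∈ C) (hψAne : ψA ≠ 0) (hψB : StrictlyPos C ψB)
    (α β : ℂ) (hα : S (V₁ (V₂ ψA)) = α • V₁ (V₂ ψA)) (hβ : S (V₂ ψB) = β • V₂ ψB) :
    S (V₂ ψA) = α • V₂ ψA ∧
      (inner ℂ (V₂ ψA) (V₂ ψB) : ℂ) = (inner ℂ ψA ψB : ℂ) ∧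
      (0 : ℂ) < (inner ℂ ψA ψB : ℂ) ∧ α = β := by
  have hαA : S (V₂ ψA) = α • V₂ ψA :=
    S.apply_eq_smul_of_commute_of_injective
      (Unitary.linearIsometryEquiv ⟨V₁, hV₁⟩).injective hcomm hα
  have hinner : ⟪V₂ ψA, V₂ ψB⟫_ℂ = ⟪ψA, ψB⟫_ℂ := V₂.inner_map_map_of_mem_unitary hV₂ ψA ψB
  have hpos : 0 < ⟪ψA, ψB⟫_ℂ := hψB.inner_pos hψA hψAne
  exact ⟨hαA, hinner, hpos,
    hS.isSymmetric.eq_of_inner_ne_zero hαA hβ (hinner ▸ hpos.ne')⟩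

theorem overlap_with_unitaries
    {X : Type*} [NormedAddCommGroup X] [InnerProductSpace ℂ X] [CompleteSpace X]
    (C : Set X) (hC : IsHilbertCone C) (S : X →L[ℂ] X) (hS : IsSelfAdjoint S)
    (V₁ V₂ : X →L[ℂ] X) (hV₁ : V₁ ∈ unitary (X →L[ℂ] X)) (hV₂ : V₂ ∈ unitary (X →L[ℂ] X))
    (hcomm : V₁ ∘L S = S ∘L V₁)
    (ψA ψB : X) (hψA : ψA ∈ C) (hψAne : ψA ≠ 0) (hψB : StrictlyPos C ψB)
    (α β : ℂ) (hα : S (V₁ (V₂ ψA)) = α • V₁ (V₂ ψA)) (hβ : S (V₂ ψB) = β • V₂ ψB) :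
    S (V₂ ψA) = α • V₂ ψA ∧
      (inner ℂ (V₂ ψA) (V₂ ψB) : ℂ) = (inner ℂ ψA ψB : ℂ) ∧
      (0 : ℂ) < (inner ℂ ψA ψB : ℂ) ∧ α = β :=
  overlap_with_unitaries_general C S hS V₁ V₂ hV₁ hV₂ hcomm ψA ψB hψA hψAne hψB α β hα hβ
end

section
/- Under the standing assumptions, let A be a bounded linear operator on L²(M, μ; X) and let K : M × M → B(X) be a kernel for A in the following sense: for all φ, ψ ∈ X the function (q, q′) ↦ ⟨φ, K(q, q′)ψ⟩ is measurable; for every F ∈ L²(M, μ; X) and μ-a.e. q, the Bochner integral ∫ K(q, q′)F(q′) dμ(q′) exists and equals (A F)(q); and for all f, g ∈ L²(M, μ; ℂ) with f ≥ 0 and g ≥ 0 a.e. and all φ, ψ ∈ X, the function (q, q′) ↦ f(q)·g(q′)·⟨φ, K(q, q′)ψ⟩ is (μ ⊗ μ)-integrable. If A maps 𝒬 into 𝒬, then for (μ ⊗ μ)-a.e. (q, q′), the operator K(q, q′) maps C into C. -/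
open scoped ComplexOrder
open MeasureTheory

/-! Testing `A` on `f φ` and `g ψ` with `φ, ψ ∈ C` and `f, g ≥ 0`, which lie in `𝒬`, and using
that `⟪F, H⟫ ≥ 0` for `F, H ∈ 𝒬`, the kernel representation and Fubini give
`∫∫ f(q) g(q') ⟪φ, K(q, q') ψ⟫ ≥ 0`. As `f` and `g` are arbitrary, `⟪φ, K(q, q') ψ⟫ ≥ 0` for
a.e. `(q, q')`: separability of `L²(μ)` turns "for each `g`, for a.e. `q`" into "for a.e. `q`, for
all `g`", and separability of `X` makes the null set independent of `φ, ψ ∈ C`. A Hilbert cone is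
self-dual, so `K(q, q')` maps `C` into `C`. -/

open scoped ENNReal InnerProductSpace
open TopologicalSpace

namespace IsHilbertCone

variable {X : Type*} [NormedAddCommGroup X] [InnerProductSpace ℂ X] {C : Set X}

/-- Self-duality: in the decomposition `w = u - v + i (u' - v')`, testing against `c ∈ C` forces
`Re ⟪c, u'⟫ = Re ⟪c, v'⟫`, which kills `u'` and `v'`; testing against `v` then kills `v`. -/
theorem mem_of_forall_inner_nonneg (hC : IsHilbertCone C) {w : X}
    (hw : ∀ c ∈ C, 0 ≤ ⟪c, w⟫_ℂ) : w ∈ C := by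
  obtain ⟨-, -, -, hpos, hdec⟩ := hC
  obtain ⟨u, hu, v, hv, u', hu', v', hv', rfl, huv, hu'v'⟩ := hdec w
  have hreal : ∀ c ∈ C, ∀ x ∈ C, (⟪c, x⟫_ℂ).im = 0 := fun c hc x hx =>
    (Complex.nonneg_iff.mp (hpos c hc x hx)).2.symm
  have hre : ∀ c ∈ C, (⟪c, u'⟫_ℂ).re = (⟪c, v'⟫_ℂ).re := by
    intro c hc
    have him := (Complex.nonneg_iff.mp (hw c hc)).2
    simp only [inner_add_right, inner_sub_right, inner_smul_right, Complex.add_im,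
      Complex.sub_im, Complex.mul_im, Complex.I_re, Complex.I_im, Complex.sub_re, zero_mul,
      one_mul, zero_add, hreal c hc u hu, hreal c hc v hv] at him
    linarith
  have hu'0 : u' = 0 := (re_inner_self_nonpos (𝕜 := ℂ)).mp <| by
    have := hre u' hu'
    rw [hu'v'] at this
    exact this.le
  have hv'0 : v' = 0 := (re_inner_self_nonpos (𝕜 := ℂ)).mp <| by
    have := hre v' hv'
    rw [hu'0, inner_zero_right] at this
    exact this.ge
  have hv0 : v = 0 := (re_inner_self_nonpos (𝕜 := ℂ)).mp <| by
    have hvu : ⟪v, u⟫_ℂ = 0 := by rw [← inner_conj_symm, huv, map_zero]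
    have := (Complex.nonneg_iff.mp (hw v hv)).1
    simp only [hu'0, hv'0, sub_self, smul_zero, add_zero, inner_sub_right, hvu, zero_sub,
      Complex.neg_re] at this
    simpa using this
  simpa [hu'0, hv'0, hv0] using hu

end IsHilbertCone

theorem subset_conicalCombinations {V : Type*} [AddCommMonoid V] [Module ℝ V] (s : Set V) :
    s ⊆ conicalCombinations s := fun x hx =>
  ⟨1, fun _ => 1, fun _ => x, fun _ => zero_le_one, fun _ => hx, by simp⟩

theorem inner_nonneg_of_mem_closure_conicalCombinations {E : Type*} [NormedAddCommGroup E]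
    [InnerProductSpace ℂ E] {s : Set E} {x : E} (hs : ∀ y ∈ s, 0 ≤ ⟪x, y⟫_ℂ) {y : E}
    (hy : y ∈ closure (conicalCombinations s)) : 0 ≤ ⟪x, y⟫_ℂ := by
  have hcont : Continuous fun y : E => ⟪x, y⟫_ℂ := continuous_const.inner continuous_id
  refine closure_minimal ?_ (isClosed_Ici.preimage hcont) hy
  rintro _ ⟨k, a, z, ha, hz, rfl⟩
  simp only [Set.mem_preimage, Set.mem_Ici, inner_sum]
  refine Finset.sum_nonneg fun i _ => ?_
  rw [← Complex.coe_smul, inner_smul_right]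
  exact mul_nonneg (Complex.zero_le_real.mpr (ha i)) (hs _ (hz i))

section KernelForm

variable {M : Type*} [MeasurableSpace M] {μ : Measure M}
  {X : Type*} [NormedAddCommGroup X] [InnerProductSpace ℂ X]

/-- Generators of the paper's cone `𝒬`, the closure of their conical combinations. -/
def elementaryPositive (μ : Measure M) (C : Set X) : Set (Lp X 2 μ) :=
  {G | ∃ φ ∈ C, ∃ f : Lp ℂ 2 μ, (∀ᵐ x ∂μ, (0 : ℂ) ≤ f x) ∧ (∀ᵐ x ∂μ, G x = f x • φ)}

theorem coeFn_toSpanSingleton_compLp {p : ℝ≥0∞} [Fact (1 ≤ p)] (φ : X) (f : Lp ℂ p μ) :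
    ((ContinuousLinearMap.toSpanSingleton ℂ φ).compLp f : M → X) =ᵐ[μ] fun x => f x • φ := by
  filter_upwards [(ContinuousLinearMap.toSpanSingleton ℂ φ).coeFn_compLp f] with x hx
  rw [hx, ContinuousLinearMap.toSpanSingleton_apply]

theorem mem_elementaryPositive {C : Set X} {φ : X} (hφ : φ ∈ C) {f : Lp ℂ 2 μ}
    (hf : ∀ᵐ x ∂μ, 0 ≤ f x) :
    (ContinuousLinearMap.toSpanSingleton ℂ φ).compLp f ∈ elementaryPositive μ C :=
  ⟨φ, hφ, f, hf, coeFn_toSpanSingleton_compLp φ f⟩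

theorem inner_nonneg_of_mem_elementaryPositive {C : Set X}
    (hC : ∀ u ∈ C, ∀ v ∈ C, 0 ≤ ⟪u, v⟫_ℂ) {F G : Lp X 2 μ}
    (hF : F ∈ elementaryPositive μ C) (hG : G ∈ elementaryPositive μ C) : 0 ≤ ⟪F, G⟫_ℂ := by
  obtain ⟨φ, hφ, f, hf, hFf⟩ := hF
  obtain ⟨ψ, hψ, g, hg, hGg⟩ := hG
  rw [L2.inner_def]
  refine integral_nonneg_of_ae ?_
  filter_upwards [hFf, hGg, hf, hg] with x hFx hGx hfx hgx
  rw [Pi.zero_apply, hFx, hGx, inner_smul_left, inner_smul_right, starRingEnd_apply,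
    hfx.isSelfAdjoint.star_eq]
  exact mul_nonneg hfx (mul_nonneg hgx (hC φ hφ ψ hψ))

variable [CompleteSpace X] [SFinite μ]

theorem inner_apply_eq_integral_kernel {A : Lp X 2 μ →L[ℂ] Lp X 2 μ}
    {K : M → M → (X →L[ℂ] X)}
    (hker : ∀ F : Lp X 2 μ, ∀ᵐ q ∂μ,
      Integrable (fun q' => K q q' (F q')) μ ∧ A F q = ∫ q', K q q' (F q') ∂μ)
    {F G : Lp X 2 μ} {f g : M → ℂ} {φ ψ : X} (hF : F =ᵐ[μ] fun x => f x • φ)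
    (hG : G =ᵐ[μ] fun x => g x • ψ) (hf : ∀ᵐ x ∂μ, 0 ≤ f x)
    (hint : Integrable (fun p : M × M => f p.1 * g p.2 * ⟪φ, K p.1 p.2 ψ⟫_ℂ) (μ.prod μ)) :
    ⟪F, A G⟫_ℂ = ∫ p, f p.1 * g p.2 * ⟪φ, K p.1 p.2 ψ⟫_ℂ ∂(μ.prod μ) := by
  have hslice : ∀ᵐ q ∂μ, ⟪F q, A G q⟫_ℂ = ∫ q', f q * (g q' * ⟪φ, K q q' ψ⟫_ℂ) ∂μ := by
    filter_upwards [hF, hker G, hf] with q hFq ⟨hKq, hAq⟩ hfq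
    rw [hFq, hAq, inner_smul_left, starRingEnd_apply, hfq.isSelfAdjoint.star_eq,
      ← integral_inner hKq, ← integral_const_mul]
    refine integral_congr_ae ?_
    filter_upwards [hG] with q' hGq'
    rw [hGq', map_smul, inner_smul_right]
  rw [L2.inner_def, integral_congr_ae hslice, integral_prod _ ?_]
  · simp only [mul_assoc]
  · simpa only [mul_assoc] using hint

theorem integral_kernel_nonneg {C : Set X}
    (hC : ∀ u ∈ C, ∀ v ∈ C, 0 ≤ ⟪u, v⟫_ℂ) {A : Lp X 2 μ →L[ℂ] Lp X 2 μ}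
    {K : M → M → (X →L[ℂ] X)}
    (hker : ∀ F : Lp X 2 μ, ∀ᵐ q ∂μ,
      Integrable (fun q' => K q q' (F q')) μ ∧ A F q = ∫ q', K q q' (F q') ∂μ)
    (hA : ∀ F ∈ closure (conicalCombinations (elementaryPositive μ C)),
      A F ∈ closure (conicalCombinations (elementaryPositive μ C)))
    {φ ψ : X} (hφ : φ ∈ C) (hψ : ψ ∈ C) {f g : Lp ℂ 2 μ} (hf : ∀ᵐ x ∂μ, 0 ≤ f x)
    (hg : ∀ᵐ x ∂μ, 0 ≤ g x)
    (hint : Integrable (fun p : M × M => f p.1 * g p.2 * ⟪φ, K p.1 p.2 ψ⟫_ℂ) (μ.prod μ)) :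
    0 ≤ ∫ p, f p.1 * g p.2 * ⟪φ, K p.1 p.2 ψ⟫_ℂ ∂(μ.prod μ) := by
  set G := (ContinuousLinearMap.toSpanSingleton ℂ ψ).compLp g
  have hAG : A G ∈ closure (conicalCombinations (elementaryPositive μ C)) :=
    hA G (subset_closure (subset_conicalCombinations _ (mem_elementaryPositive hψ hg)))
  rw [← inner_apply_eq_integral_kernel hker (coeFn_toSpanSingleton_compLp φ f)
    (coeFn_toSpanSingleton_compLp ψ g) hf hint]
  exact inner_nonneg_of_mem_closure_conicalCombinations
    (fun H hH => inner_nonneg_of_mem_elementaryPositive hC (mem_elementaryPositive hφ hf) hH) hAG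

end KernelForm

section NonnegTensors

variable {α : Type*} [MeasurableSpace α] {μ : Measure α}

theorem ae_nonneg_of_forall_setIntegral_nonneg_complex [SigmaFinite μ] {f : α → ℂ}
    (hf : ∀ s, MeasurableSet s → μ s < ∞ → IntegrableOn f s μ)
    (hf_nonneg : ∀ s, MeasurableSet s → μ s < ∞ → 0 ≤ ∫ x in s, f x ∂μ) :
    ∀ᵐ x ∂μ, 0 ≤ f x := by
  have hre : ∀ᵐ x ∂μ, 0 ≤ (f x).re :=
    ae_nonneg_of_forall_setIntegral_nonneg_of_sigmaFinite (fun s hs hμs => (hf s hs hμs).re)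
      fun s hs hμs => by
        simp only [← RCLike.re_to_complex, integral_re (hf s hs hμs)]
        exact (Complex.nonneg_iff.mp (hf_nonneg s hs hμs)).1
  have him : (fun x => (f x).im) =ᵐ[μ] 0 :=
    ae_eq_zero_of_forall_setIntegral_eq_of_sigmaFinite (fun s hs hμs => (hf s hs hμs).im)
      fun s hs hμs => by
        simp only [← RCLike.im_to_complex, integral_im (hf s hs hμs)]
        exact (Complex.nonneg_iff.mp (hf_nonneg s hs hμs)).2.symm
  filter_upwards [hre, him] with x hxre hxim
  exact Complex.nonneg_iff.mpr ⟨hxre, hxim.symm⟩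

/-- Pass to an a.e. convergent subsequence and dominate by `‖k‖`. -/
theorem integral_mul_nonneg_of_mem_closure {p : ℝ≥0∞} [Fact (1 ≤ p)] {k : α → ℂ}
    (hk : Integrable k μ) {D : Set (Lp ℂ p μ)} (hD_le : ∀ g ∈ D, ∀ᵐ x ∂μ, ‖g x‖ ≤ 1)
    (hD : ∀ g ∈ D, 0 ≤ ∫ x, g x * k x ∂μ) {g₀ : Lp ℂ p μ} (hg₀ : g₀ ∈ closure D) :
    0 ≤ ∫ x, g₀ x * k x ∂μ := by
  obtain ⟨u, huD, hu⟩ := mem_closure_iff_seq_limit.mp hg₀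
  obtain ⟨ns, -, hns⟩ := (tendstoInMeasure_of_tendsto_Lp hu).exists_seq_tendsto_ae
  have hlim : Filter.Tendsto (fun n => ∫ x, u (ns n) x * k x ∂μ) Filter.atTop
      (nhds (∫ x, g₀ x * k x ∂μ)) := by
    refine tendsto_integral_of_dominated_convergence (fun x => ‖k x‖)
      (fun n => (Lp.aestronglyMeasurable _).mul hk.aestronglyMeasurable) hk.norm
      (fun n => ?_) ?_
    · filter_upwards [hD_le _ (huD (ns n))] with x hx
      rw [norm_mul]
      exact mul_le_of_le_one_left (norm_nonneg _) hx
    · filter_upwards [hns] with x hx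
      exact hx.mul tendsto_const_nhds
  exact isClosed_Ici.mem_of_tendsto hlim (Filter.Eventually.of_forall fun n => hD _ (huD (ns n)))

def NonnegOnNonnegTensors (μ : Measure α) (h : α × α → ℂ) : Prop :=
  ∀ f g : Lp ℂ 2 μ, (∀ᵐ x ∂μ, 0 ≤ f x) → (∀ᵐ x ∂μ, 0 ≤ g x) →
    Integrable (fun p : α × α => f p.1 * g p.2 * h p) (μ.prod μ) ∧
      0 ≤ ∫ p, f p.1 * g p.2 * h p ∂(μ.prod μ)

theorem ae_indicatorConstLp_one_nonneg {s : Set α} (hs : MeasurableSet s) (hμs : μ s ≠ ∞) :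
    ∀ᵐ x ∂μ, 0 ≤ indicatorConstLp 2 hs hμs (1 : ℂ) x := by
  filter_upwards [indicatorConstLp_coeFn (p := 2) (hs := hs) (hμs := hμs) (c := (1 : ℂ))]
    with x hx
  rw [hx]
  exact Set.indicator_nonneg (fun _ _ => zero_le_one) x

variable [SigmaFinite μ] {h : α × α → ℂ}

theorem NonnegOnNonnegTensors.ae_integral_mul_nonneg (hh : NonnegOnNonnegTensors μ h)
    {g : Lp ℂ 2 μ} (hg : ∀ᵐ x ∂μ, 0 ≤ g x) : ∀ᵐ q ∂μ, 0 ≤ ∫ q', g q' * h (q, q') ∂μ := by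
  set Φ : α → ℂ := fun q => ∫ q', g q' * h (q, q') ∂μ
  have hset : ∀ s, MeasurableSet s → μ s < ∞ → IntegrableOn Φ s μ ∧ 0 ≤ ∫ q in s, Φ q ∂μ := by
    intro s hs hμs
    set f := indicatorConstLp 2 hs hμs.ne (1 : ℂ)
    have hf : (f : α → ℂ) =ᵐ[μ] s.indicator fun _ => 1 := indicatorConstLp_coeFn
    obtain ⟨hint, hpos⟩ := hh f g (ae_indicatorConstLp_one_nonneg hs hμs.ne) hg
    have hind : (fun q => ∫ q', f q * g q' * h (q, q') ∂μ) =ᵐ[μ] s.indicator Φ := by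
      filter_upwards [hf] with q hq
      simp only [hq, mul_assoc, integral_const_mul]
      by_cases hqs : q ∈ s <;> simp [hqs, Φ]
    refine ⟨(integrable_indicator_iff hs).mp (hint.integral_prod_left.congr hind), ?_⟩
    rwa [← integral_indicator hs, ← integral_congr_ae hind, ← integral_prod _ hint]
  exact ae_nonneg_of_forall_setIntegral_nonneg_complex (fun s hs hμs => (hset s hs hμs).1)
    fun s hs hμs => (hset s hs hμs).2

theorem NonnegOnNonnegTensors.ae_integrable_indicator_slice (hh : NonnegOnNonnegTensors μ h)
    {E : Set α} (hE : MeasurableSet E) (hμE : μ E ≠ ∞) :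
    ∀ᵐ q ∂μ, q ∈ E → Integrable (E.indicator fun q' => h (q, q')) μ := by
  set f := indicatorConstLp 2 hE hμE (1 : ℂ)
  have hf : (f : α → ℂ) =ᵐ[μ] E.indicator fun _ => 1 := indicatorConstLp_coeFn
  have hf_nonneg := ae_indicatorConstLp_one_nonneg hE hμE
  filter_upwards [(hh f f hf_nonneg hf_nonneg).1.prod_right_ae, hf] with q hq hfq hqE
  refine hq.congr ?_
  filter_upwards [hf] with q' hfq'
  by_cases hq'E : q' ∈ E <;> simp [hfq, hfq', hqE, hq'E]

/-- For almost every `q`, the slice `h (q, ·)` pairs nonnegatively with a countable dense family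
of functions `0 ≤ g ≤ 1_E` at once; indicators of subsets of `E` are limits of that family. -/
theorem NonnegOnNonnegTensors.ae_ae_nonneg_of_mem [SeparableSpace (Lp ℂ 2 μ)]
    (hh : NonnegOnNonnegTensors μ h) {E : Set α} (hE : MeasurableSet E) (hμE : μ E ≠ ∞) :
    ∀ᵐ q ∂μ, q ∈ E → ∀ᵐ q' ∂μ, q' ∈ E → 0 ≤ h (q, q') := by
  set T : Set (Lp ℂ 2 μ) :=
    {g | ∀ᵐ x ∂μ, 0 ≤ g x ∧ ‖g x‖ ≤ E.indicator (fun _ => (1 : ℝ)) x}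
  obtain ⟨D, hDT, hDc, hTD⟩ := (IsSeparable.of_separableSpace T).exists_countable_dense_subset
  have hD : ∀ᵐ q ∂μ, ∀ g ∈ D, 0 ≤ ∫ q', g q' * h (q, q') ∂μ :=
    (ae_ball_iff hDc).2 fun g hg =>
      hh.ae_integral_mul_nonneg (Filter.Eventually.mono (hDT hg) fun _ hx => hx.1)
  filter_upwards [hD, hh.ae_integrable_indicator_slice hE hμE] with q hqD hslice hqE
  set k := E.indicator fun q' => h (q, q')
  have hk := hslice hqE
  have hT_le : ∀ g ∈ T, ∀ᵐ x ∂μ, ‖g x‖ ≤ 1 := fun g (hg : ∀ᵐ x ∂μ, _) =>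
    hg.mono fun x hx => hx.2.trans (Set.indicator_le_self' (fun _ _ => zero_le_one) x)
  have hTk : ∀ g ∈ T, ∫ q', g q' * h (q, q') ∂μ = ∫ q', g q' * k q' ∂μ := by
    intro g (hg : ∀ᵐ x ∂μ, _)
    refine integral_congr_ae (hg.mono fun x hx => ?_)
    by_cases hxE : x ∈ E
    · simp [k, hxE]
    · have hgx : g x = 0 := norm_le_zero_iff.mp (by simpa [hxE] using hx.2)
      simp [hgx]
  have htest : ∀ t, MeasurableSet t → μ t < ∞ → 0 ≤ ∫ x in t, k x ∂μ := by
    intro t ht _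
    set g₀ := indicatorConstLp 2 (ht.inter hE)
      (measure_ne_top_of_subset Set.inter_subset_right hμE) (1 : ℂ)
    have hg₀ : (g₀ : α → ℂ) =ᵐ[μ] (t ∩ E).indicator fun _ => 1 := indicatorConstLp_coeFn
    have hg₀T : g₀ ∈ T := by
      filter_upwards [hg₀] with x hx
      by_cases hxt : x ∈ t <;> by_cases hxE : x ∈ E <;> simp [hx, hxt, hxE]
    have hpair := integral_mul_nonneg_of_mem_closure hk (fun g hg => hT_le g (hDT hg))
      (fun g hg => hTk g (hDT hg) ▸ hqD g hg) (hTD hg₀T)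
    rwa [← integral_indicator ht, ← integral_congr_ae (hg₀.mono fun x hx => ?_)]
    by_cases hxt : x ∈ t <;> by_cases hxE : x ∈ E <;> simp [hx, hxt, hxE, k]
  filter_upwards [ae_nonneg_of_forall_setIntegral_nonneg_complex
    (fun t _ _ => hk.integrableOn) htest] with q' hq' hq'E
  simpa [k, hq'E] using hq'

theorem NonnegOnNonnegTensors.ae_nonneg [SeparableSpace (Lp ℂ 2 μ)]
    (hh : NonnegOnNonnegTensors μ h) (hmeas : Measurable h) :
    ∀ᵐ p ∂(μ.prod μ), 0 ≤ h p := by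
  rw [Measure.ae_prod_iff_ae_ae (p := fun p => 0 ≤ h p) (hmeas measurableSet_Ici)]
  filter_upwards [ae_all_iff.2 fun n => hh.ae_ae_nonneg_of_mem (measurableSet_spanningSets μ n)
    (measure_spanningSets_lt_top μ n).ne] with q hq
  have hq_mem := mem_spanningSetsIndex μ q
  filter_upwards [ae_all_iff.2 fun n =>
    hq (max (spanningSetsIndex μ q) n) (monotone_spanningSets μ (le_max_left _ _) hq_mem)]
    with q' hq'
  exact hq' _ (monotone_spanningSets μ (le_max_right _ _) (mem_spanningSetsIndex μ q'))

end NonnegTensors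

theorem ae_forall_inner_nonneg_of_separableSpace {ι : Type*} [MeasurableSpace ι] {ν : Measure ι}
    {X : Type*} [NormedAddCommGroup X] [InnerProductSpace ℂ X] [SeparableSpace X] {C : Set X}
    (T : ι → X →L[ℂ] X) (hT : ∀ φ ∈ C, ∀ ψ ∈ C, ∀ᵐ p ∂ν, 0 ≤ ⟪φ, T p ψ⟫_ℂ) :
    ∀ᵐ p ∂ν, ∀ φ ∈ C, ∀ ψ ∈ C, 0 ≤ ⟪φ, T p ψ⟫_ℂ := by
  obtain ⟨D, hDC, hDc, hCD⟩ := (IsSeparable.of_separableSpace C).exists_countable_dense_subset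
  have hD : ∀ᵐ p ∂ν, ∀ φ ∈ D, ∀ ψ ∈ D, 0 ≤ ⟪φ, T p ψ⟫_ℂ :=
    (ae_ball_iff hDc).2 fun φ hφ => (ae_ball_iff hDc).2 fun ψ hψ => hT φ (hDC hφ) ψ (hDC hψ)
  filter_upwards [hD] with p hp φ hφ ψ hψ
  have hcont : Continuous fun x : X × X => ⟪x.1, T p x.2⟫_ℂ :=
    continuous_fst.inner ((T p).continuous.comp continuous_snd)
  have hφψ : (φ, ψ) ∈ closure (D ×ˢ D) := by
    rw [closure_prod_eq]
    exact ⟨hCD hφ, hCD hψ⟩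
  exact closure_minimal (fun x hx => hp x.1 hx.1 x.2 hx.2) (isClosed_Ici.preimage hcont) hφψ

theorem kernel_posPreserving_ae
    {M : Type*} [MeasurableSpace M] (μ : Measure M) [SigmaFinite μ]
    [TopologicalSpace.SeparableSpace (Lp ℂ 2 μ)]
    {X : Type*} [NormedAddCommGroup X] [InnerProductSpace ℂ X] [CompleteSpace X]
    [TopologicalSpace.SeparableSpace X]
    (C : Set X) (hC : IsHilbertCone C)
    (A : Lp X 2 μ →L[ℂ] Lp X 2 μ) (K : M → M → (X →L[ℂ] X))
    (hmeas : ∀ φ ψ : X, Measurable (fun p : M × M => (inner ℂ φ (K p.1 p.2 ψ) : ℂ)))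
    (hker : ∀ F : Lp X 2 μ, ∀ᵐ q ∂μ,
      Integrable (fun q' => K q q' (F q')) μ ∧ A F q = ∫ q', K q q' (F q') ∂μ)
    (hint : ∀ f g : Lp ℂ 2 μ, (∀ᵐ x ∂μ, (0 : ℂ) ≤ f x) → (∀ᵐ x ∂μ, (0 : ℂ) ≤ g x) →
      ∀ φ ψ : X, Integrable
        (fun p : M × M => f p.1 * g p.2 * (inner ℂ φ (K p.1 p.2 ψ) : ℂ)) (μ.prod μ))
    (hA : ∀ F ∈ closure (conicalCombinations
        {G : Lp X 2 μ | ∃ φ ∈ C, ∃ f : Lp ℂ 2 μ,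
          (∀ᵐ x ∂μ, (0 : ℂ) ≤ f x) ∧ (∀ᵐ x ∂μ, G x = f x • φ)}),
      A F ∈ closure (conicalCombinations
        {G : Lp X 2 μ | ∃ φ ∈ C, ∃ f : Lp ℂ 2 μ,
          (∀ᵐ x ∂μ, (0 : ℂ) ≤ f x) ∧ (∀ᵐ x ∂μ, G x = f x • φ)})) :
    ∀ᵐ p ∂(μ.prod μ), ∀ u ∈ C, K p.1 p.2 u ∈ C := by
  have hCpos : ∀ u ∈ C, ∀ v ∈ C, 0 ≤ ⟪u, v⟫_ℂ := hC.2.2.2.1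
  have hmatrix : ∀ φ ∈ C, ∀ ψ ∈ C, ∀ᵐ p ∂(μ.prod μ), 0 ≤ ⟪φ, K p.1 p.2 ψ⟫_ℂ :=
    fun φ hφ ψ hψ => NonnegOnNonnegTensors.ae_nonneg (fun f g hf hg =>
      ⟨hint f g hf hg φ ψ,
        integral_kernel_nonneg hCpos hker hA hφ hψ hf hg (hint f g hf hg φ ψ)⟩) (hmeas φ ψ)
  filter_upwards [ae_forall_inner_nonneg_of_separableSpace (fun p => K p.1 p.2) hmatrix]
    with p hp u hu
  exact hC.mem_of_forall_inner_nonneg fun v hv => hp v hv u hu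
end
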